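/- arXiv:2206.15001 — 9 statements merged into one kernel-verified Lean document; each statement's English description precedes it below -/
import Mathlib

section
/- For every positive integer a, p̄(a | no 1's)·p̄(1) ≥ p̄(a+1 | no 1's), and the inequality is strict when a ≥ 3. -/
open Finset

/-- Number of overpartitions of `n`: an overpartition is encoded as a pair
(overlined parts = partition into distinct parts, non-overlined parts =
arbitrary partition). -/
def overp (n : ℕ) : ℕ :=
  ∑ ij ∈ Finset.HasAntidiagonal.antidiagonal n,
    (Nat.Partition.distincts ij.1).card * Fintype.card (Nat.Partition ij.2)

/-- Overpartitions of `n` with no non-overlined part equal to `i`. -/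
def overpNo (i n : ℕ) : ℕ :=
  ∑ ij ∈ Finset.HasAntidiagonal.antidiagonal n,
    (Nat.Partition.distincts ij.1).card *
      (Finset.univ.filter (fun p : Nat.Partition ij.2 => i ∉ p.parts)).card

/-!
Write an overpartition counted by `overpNo 1 (n + 1)` as a pair `(d, p)` of overlined and
non-overlined parts and send it to an overpartition of `n` together with a bit: drop `1̄`;
otherwise trade a part `2` for `1̄`; otherwise trade `2̄` for `1̄`; otherwise all parts are at
least `3`, and the smallest part of `p` (of `d` when `p` is empty) is decreased by one.
The bit and the presence of `1̄` in the image tell the rules apart, and decreasing a smallest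
part is undone by increasing a smallest part, so the map is injective.
-/

namespace Multiset

/-- The least element of a multiset of naturals (`0` for the empty multiset). -/
noncomputable def natMin (s : Multiset ℕ) : ℕ := sInf {k | k ∈ s}

noncomputable def decMin (s : Multiset ℕ) : Multiset ℕ := (s.natMin - 1) ::ₘ s.erase s.natMin

noncomputable def incMin (s : Multiset ℕ) : Multiset ℕ := (s.natMin + 1) ::ₘ s.erase s.natMin

variable {s : Multiset ℕ} {a k : ℕ}

theorem natMin_zero : natMin 0 = 0 := by simp [natMin]

theorem natMin_mem (hs : s ≠ 0) : s.natMin ∈ s :=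
  Nat.sInf_mem (Multiset.exists_mem_of_ne_zero hs)

theorem natMin_le (hk : k ∈ s) : s.natMin ≤ k := Nat.sInf_le hk

theorem le_natMin (hs : s ≠ 0) (h : ∀ k ∈ s, a ≤ k) : a ≤ s.natMin := h _ (natMin_mem hs)

theorem natMin_cons_of_forall_le (h : ∀ k ∈ s, a ≤ k) : natMin (a ::ₘ s) = a :=
  le_antisymm (natMin_le (mem_cons_self a s))
    (le_natMin cons_ne_zero (by simpa using h))

@[simp]
theorem natMin_singleton : natMin {a} = a :=
  natMin_cons_of_forall_le (by simp)

theorem ne_zero_of_natMin_ne_zero (hm : s.natMin ≠ 0) : s ≠ 0 := by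
  rintro rfl
  exact hm natMin_zero

theorem natMin_sub_one_le_of_mem_decMin (hk : k ∈ s.decMin) : s.natMin - 1 ≤ k := by
  rcases mem_cons.mp hk with rfl | hk
  · exact le_rfl
  · exact (natMin_le (mem_of_mem_erase hk)).trans' (Nat.sub_le _ _)

theorem natMin_decMin : s.decMin.natMin = s.natMin - 1 :=
  natMin_cons_of_forall_le fun _ hk =>
    (natMin_le (mem_of_mem_erase hk)).trans' (Nat.sub_le _ _)

theorem Nodup.decMin (hs : s.Nodup) : s.decMin.Nodup := by
  refine nodup_cons.mpr ⟨fun hmem => ?_, hs.erase _⟩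
  have hle := natMin_le (mem_of_mem_erase hmem)
  -- only `natMin s = 0` is compatible with `hle`, and then `decMin s = s`
  obtain h0 : s.natMin = 0 := by omega
  rw [h0] at hmem
  exact hs.notMem_erase hmem

theorem sum_decMin (hm : s.natMin ≠ 0) : s.decMin.sum + 1 = s.sum := by
  have := sum_erase (natMin_mem (ne_zero_of_natMin_ne_zero hm))
  rw [decMin, sum_cons]
  omega

theorem incMin_decMin (hm : s.natMin ≠ 0) : s.decMin.incMin = s := by
  rw [incMin, natMin_decMin, decMin, erase_cons_head, Nat.sub_add_cancel (Nat.pos_of_ne_zero hm),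
    cons_erase (natMin_mem (ne_zero_of_natMin_ne_zero hm))]

end Multiset

/-- An overpartition of `n` without non-overlined `1`, as (overlined parts, non-overlined parts). -/
def IsOverpNoOne (n : ℕ) (x : Multiset ℕ × Multiset ℕ) : Prop :=
  x.1.Nodup ∧ (∀ k ∈ x.1, 0 < k) ∧ (∀ k ∈ x.2, 2 ≤ k) ∧ x.1.sum + x.2.sum = n

def partitionPairParts (x : Σ ij : ℕ × ℕ, Nat.Partition ij.1 × Nat.Partition ij.2) :
    Multiset ℕ × Multiset ℕ :=
  (x.2.1.parts, x.2.2.parts)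

theorem partitionPairParts_injective : Function.Injective partitionPairParts := by
  rintro ⟨⟨i, j⟩, d, p⟩ ⟨⟨i', j'⟩, d', p'⟩ h
  simp only [partitionPairParts, Prod.mk.injEq] at h
  obtain ⟨hd, hp⟩ := h
  obtain rfl : i = i' := by
    simpa only [d.parts_sum, d'.parts_sum] using congrArg Multiset.sum hd
  obtain rfl : j = j' := by
    simpa only [p.parts_sum, p'.parts_sum] using congrArg Multiset.sum hp
  simp [Nat.Partition.ext hd, Nat.Partition.ext hp]

def overpNoOneSigma (n : ℕ) :
    Finset (Σ ij : ℕ × ℕ, Nat.Partition ij.1 × Nat.Partition ij.2) :=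
  (antidiagonal n).sigma fun ij =>
    Nat.Partition.distincts ij.1 ×ˢ univ.filter fun p : Nat.Partition ij.2 => 1 ∉ p.parts

def overpNoOneFinset (n : ℕ) : Finset (Multiset ℕ × Multiset ℕ) :=
  (overpNoOneSigma n).image partitionPairParts

theorem card_overpNoOneFinset (n : ℕ) : (overpNoOneFinset n).card = overpNo 1 n := by
  rw [overpNoOneFinset, card_image_of_injective _ partitionPairParts_injective, overpNoOneSigma,
    card_sigma, overpNo]
  exact sum_congr rfl fun ij _ => card_product _ _

theorem mem_overpNoOneFinset {n : ℕ} {x : Multiset ℕ × Multiset ℕ} :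
    x ∈ overpNoOneFinset n ↔ IsOverpNoOne n x := by
  simp only [overpNoOneFinset, overpNoOneSigma, mem_image, mem_sigma, mem_product,
    HasAntidiagonal.mem_antidiagonal, Nat.Partition.distincts, mem_filter, mem_univ, true_and]
  constructor
  · rintro ⟨⟨⟨i, j⟩, d, p⟩, ⟨hij, hd, hp⟩, rfl⟩
    refine ⟨hd, fun k hk => d.parts_pos hk, fun k hk => ?_, ?_⟩
    · have := p.parts_pos hk
      have : k ≠ 1 := by rintro rfl; exact hp hk
      omega
    · simpa [partitionPairParts, d.parts_sum, p.parts_sum] using hij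
  · rintro ⟨hnd, hd, hp, hsum⟩
    have hp1 : 1 ∉ x.2 := fun h => by have := hp 1 h; omega
    exact ⟨⟨(x.1.sum, x.2.sum), ⟨x.1, hd _, rfl⟩,
      ⟨x.2, fun hk => two_pos.trans_le (hp _ hk), rfl⟩⟩, ⟨hsum, hnd, hp1⟩, rfl⟩

namespace IsOverpNoOne

open Multiset

noncomputable def lower : Multiset ℕ × Multiset ℕ → (Multiset ℕ × Multiset ℕ) × Bool
  | (d, p) =>
    if 1 ∈ d then ((d.erase 1, p), false)
    else if 2 ∈ p then ((1 ::ₘ d, p.erase 2), true)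
    else if 2 ∈ d then ((1 ::ₘ d.erase 2, p), false)
    else if p = 0 then ((d.decMin, 0), true)
    else ((d, p.decMin), true)

noncomputable def raise : (Multiset ℕ × Multiset ℕ) × Bool → Multiset ℕ × Multiset ℕ
  | ((d, p), false) => if 1 ∈ d then (2 ::ₘ d.erase 1, p) else (1 ::ₘ d, p)
  | ((d, p), true) =>
    if 1 ∈ d then (d.erase 1, 2 ::ₘ p)
    else if p = 0 then (d.incMin, 0)
    else (d, p.incMin)

variable {n : ℕ} {d p : Multiset ℕ}

theorem fst_ne_zero (h : IsOverpNoOne (n + 1) (d, 0)) : d ≠ 0 := by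
  rintro rfl
  simpa using h.2.2.2

theorem three_le_natMin (h : IsOverpNoOne (n + 1) (d, p)) (h1 : 1 ∉ d) (h2p : 2 ∉ p)
    (h2d : 2 ∉ d) : (d ≠ 0 → 3 ≤ d.natMin) ∧ (p ≠ 0 → 3 ≤ p.natMin) := by
  obtain ⟨-, hd, hp, -⟩ := h
  refine ⟨fun hd0 => le_natMin hd0 fun k hk => ?_, fun hp0 => le_natMin hp0 fun k hk => ?_⟩
  · have := hd k hk
    have : k ≠ 1 := by rintro rfl; exact h1 hk
    have : k ≠ 2 := by rintro rfl; exact h2d hk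
    omega
  · have := hp k hk
    have : k ≠ 2 := by rintro rfl; exact h2p hk
    omega

theorem lower_fst (h : IsOverpNoOne (n + 1) (d, p)) : IsOverpNoOne n (lower (d, p)).1 := by
  have hmin := three_le_natMin h
  obtain ⟨hnd, hd, hp, hsum⟩ := h
  simp only at hnd hd hp hsum
  simp only [lower]
  split_ifs with h1 h2p h2d hp0
  · have := sum_erase h1
    exact ⟨hnd.erase 1, fun k hk => hd k (mem_of_mem_erase hk), hp, by simp only; omega⟩
  · have := sum_erase h2p
    refine ⟨nodup_cons.mpr ⟨h1, hnd⟩, ?_, fun k hk => hp k (mem_of_mem_erase hk), ?_⟩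
    · simpa using hd
    · simp only [Multiset.sum_cons]; omega
  · have := sum_erase h2d
    refine ⟨nodup_cons.mpr ⟨fun h => h1 (mem_of_mem_erase h), hnd.erase 2⟩, ?_, hp, ?_⟩
    · simpa using fun k hk => hd k (mem_of_mem_erase hk)
    · simp only [Multiset.sum_cons]; omega
  · subst hp0
    have h3 := (hmin h1 h2p h2d).1 (fst_ne_zero ⟨hnd, hd, hp, hsum⟩)
    have := sum_decMin (s := d) (by omega)
    refine ⟨hnd.decMin, fun k hk => ?_, by simp, ?_⟩
    · have := natMin_sub_one_le_of_mem_decMin hk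
      omega
    · simp only [sum_zero, add_zero] at hsum ⊢
      omega
  · have h3 := (hmin h1 h2p h2d).2 hp0
    have := sum_decMin (s := p) (by omega)
    refine ⟨hnd, hd, fun k hk => ?_, by simp only; omega⟩
    have := natMin_sub_one_le_of_mem_decMin hk
    omega

theorem raise_lower (h : IsOverpNoOne (n + 1) (d, p)) : raise (lower (d, p)) = (d, p) := by
  have hmin := three_le_natMin h
  simp only [lower]
  split_ifs with h1 h2p h2d hp0
  · simp [raise, h.1.notMem_erase, cons_erase h1]
  · simp [raise, cons_erase h2p]
  · simp [raise, cons_erase h2d]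
  · subst hp0
    have h3 := (hmin h1 h2p h2d).1 (fst_ne_zero h)
    have h1' : 1 ∉ d.decMin := fun hk => by
      have := natMin_sub_one_le_of_mem_decMin hk
      omega
    simp [raise, h1', incMin_decMin (s := d) (by omega)]
  · have h3 := (hmin h1 h2p h2d).2 hp0
    have : p.decMin ≠ 0 := cons_ne_zero
    simp [raise, h1, this, incMin_decMin (s := p) (by omega)]

end IsOverpNoOne

open IsOverpNoOne

theorem image_lower_subset (n : ℕ) :
    (overpNoOneFinset (n + 1)).image lower ⊆ overpNoOneFinset n ×ˢ (univ : Finset Bool) := by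
  simp only [subset_iff, mem_image, mem_product, mem_univ, and_true, mem_overpNoOneFinset]
  rintro _ ⟨⟨d, p⟩, hx, rfl⟩
  exact lower_fst hx

theorem card_image_lower (n : ℕ) :
    ((overpNoOneFinset (n + 1)).image lower).card = overpNo 1 (n + 1) := by
  rw [card_image_of_injOn, card_overpNoOneFinset]
  refine Set.LeftInvOn.injOn (f₁' := raise) fun x hx => ?_
  obtain ⟨d, p⟩ := x
  exact raise_lower (mem_overpNoOneFinset.mp hx)

theorem raise_of_mem_image_lower {n : ℕ} {w : (Multiset ℕ × Multiset ℕ) × Bool}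
    (hw : w ∈ (overpNoOneFinset (n + 1)).image lower) :
    IsOverpNoOne (n + 1) (raise w) ∧ lower (raise w) = w := by
  obtain ⟨⟨d, p⟩, hx, rfl⟩ := mem_image.mp hw
  rw [mem_overpNoOneFinset] at hx
  rw [raise_lower hx]
  exact ⟨hx, rfl⟩

theorem exists_notMem_image_lower {n : ℕ} (hn : 3 ≤ n) :
    ∃ w ∈ overpNoOneFinset n ×ˢ (univ : Finset Bool),
      w ∉ (overpNoOneFinset (n + 1)).image lower := by
  simp only [mem_product, mem_univ, and_true, mem_overpNoOneFinset]
  obtain rfl | hn := hn.eq_or_lt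
  · -- `raise` sends `1̄ + 2̄` to the non-overpartition `2̄ + 2̄`
    refine ⟨(({1, 2}, 0), false), ⟨by decide, by simp, by simp, by simp⟩, fun hw => ?_⟩
    have := (raise_of_mem_image_lower hw).1.1
    simp [raise] at this
  · -- `raise` sends `2̄ + (n - 2)` to `2̄ + (n - 1)`, which `lower` sends to `1̄ + (n - 1)`
    refine ⟨(({2}, {n - 2}), true), ⟨by simp, by simp, by simp; omega, by simp; omega⟩,
      fun hw => ?_⟩
    have := congrArg Prod.snd (raise_of_mem_image_lower hw).2
    have h2 : 2 ≠ n - 2 + 1 := by omega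
    simp [raise, lower, Multiset.incMin, h2] at this

theorem overpNo_one_succ_le (n : ℕ) : overpNo 1 (n + 1) ≤ overpNo 1 n * 2 := by
  simpa [← card_image_lower n, card_product, card_overpNoOneFinset] using
    card_le_card (image_lower_subset n)

theorem overpNo_one_succ_lt {n : ℕ} (hn : 3 ≤ n) : overpNo 1 (n + 1) < overpNo 1 n * 2 := by
  obtain ⟨w, hw, hw'⟩ := exists_notMem_image_lower hn
  simpa [← card_image_lower n, card_product, card_overpNoOneFinset] using
    card_lt_card ((ssubset_iff_of_subset (image_lower_subset n)).mpr ⟨w, hw, hw'⟩)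

theorem overpNo1_mul_p1_general (a : ℕ) :
    overpNo 1 (a + 1) ≤ overpNo 1 a * overp 1 ∧
      (3 ≤ a → overpNo 1 (a + 1) < overpNo 1 a * overp 1) := by
  have hp1 : overp 1 = 2 := by decide
  rw [hp1]
  exact ⟨overpNo_one_succ_le a, overpNo_one_succ_lt⟩

theorem overpNo1_mul_p1 (a : ℕ) (ha : 1 ≤ a) :
    overpNo 1 (a + 1) ≤ overpNo 1 a * overp 1 ∧
      (3 ≤ a → overpNo 1 (a + 1) < overpNo 1 a * overp 1) :=
  overpNo1_mul_p1_general a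
end

section
/- For every integer a ≥ 2, p̄(a | no 1's)·p̄(2) > p̄(a+2 | no 1's). -/
open Finset

/-!
Write `d n` for the number of partitions of `n` into distinct parts and `q n` for the number of
partitions of `n` with no part equal to 1, so that `overpNo 1 n = ∑ d k * q (n - k)` and
`overp 2 = 4`. Removing a part 1, or else lowering the smallest part by one, shows
`d (k + 1) ≤ 2 * d k`; removing a part 2, or else lowering the smallest part, shows
`q (m + 2) ≤ q (m + 1) + q m`. Hence every term `d (k + 2) * q (n - k)` of `overpNo 1 (n + 2)` is at
most `4 * d k * q (n - k)`, and the two remaining terms `q (n + 2) + q (n + 1)` are paid for by the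
slack in the first three terms, which comes from `d 0 = d 1 = d 2 = 1`, `d 3 ≤ 2`, `d 4 ≤ 3`.
-/

theorem Multiset.eq_of_cons_pred_erase_eq {s t : Multiset ℕ} {a b : ℕ} (ha : a ∈ s) (hb : b ∈ t)
    (ha0 : 0 < a) (hb0 : 0 < b) (has : ∀ x ∈ s, a ≤ x) (hbt : ∀ x ∈ t, b ≤ x)
    (h : (a - 1) ::ₘ s.erase a = (b - 1) ::ₘ t.erase b) : s = t := by
  have hab : a = b := by
    have hat : a - 1 = b - 1 ∨ b ≤ a - 1 :=
      (Multiset.mem_cons.mp (h ▸ Multiset.mem_cons_self _ _)).imp id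
        fun hx => hbt _ (Multiset.mem_of_mem_erase hx)
    have hbs : b - 1 = a - 1 ∨ a ≤ b - 1 :=
      (Multiset.mem_cons.mp (h.symm ▸ Multiset.mem_cons_self _ _)).imp id
        fun hx => has _ (Multiset.mem_of_mem_erase hx)
    omega
  subst hab
  rw [← Multiset.cons_erase ha, ← Multiset.cons_erase hb, (Multiset.cons_inj_right _).mp h]

namespace Nat.Partition

variable {n : ℕ}

def noOnes (n : ℕ) : Finset n.Partition := univ.filter fun p => 1 ∉ p.parts

theorem parts_ne_zero (p : (n + 1).Partition) : p.parts ≠ 0 := by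
  rintro h
  simpa [h] using p.parts_sum

def minPart (p : (n + 1).Partition) : ℕ :=
  p.parts.toFinset.min' (Multiset.toFinset_nonempty.mpr p.parts_ne_zero)

theorem minPart_mem (p : (n + 1).Partition) : p.minPart ∈ p.parts :=
  Multiset.mem_toFinset.mp (min'_mem _ _)

theorem minPart_le (p : (n + 1).Partition) {i : ℕ} (hi : i ∈ p.parts) : p.minPart ≤ i :=
  min'_le _ _ (Multiset.mem_toFinset.mpr hi)

theorem two_le_minPart {p : (n + 1).Partition} (h : 1 ∉ p.parts) : 2 ≤ p.minPart := by
  have := p.parts_pos p.minPart_mem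
  have := p.minPart_mem.ne_of_notMem h
  omega

/-- A smallest part `1` is removed rather than lowered to `0` (`ofSums` drops zeros). -/
def decMinPart (p : (n + 1).Partition) : n.Partition :=
  ofSums n ((p.minPart - 1) ::ₘ p.parts.erase p.minPart) (by
    have := congrArg Multiset.sum (Multiset.cons_erase p.minPart_mem)
    have := p.parts_pos p.minPart_mem
    simp only [Multiset.sum_cons, p.parts_sum] at *
    omega)

theorem decMinPart_parts {p : (n + 1).Partition} (h : 1 ∉ p.parts) :
    p.decMinPart.parts = (p.minPart - 1) ::ₘ p.parts.erase p.minPart := by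
  have := two_le_minPart h
  refine Multiset.filter_eq_self.mpr fun i hi => ?_
  rcases Multiset.mem_cons.mp hi with rfl | hi
  · omega
  · exact (p.parts_pos (Multiset.mem_of_mem_erase hi)).ne'

theorem decMinPart_injOn : Set.InjOn (decMinPart (n := n)) {p | 1 ∉ p.parts} := by
  intro p hp q hq hpq
  have h := congrArg parts hpq
  rw [decMinPart_parts hp, decMinPart_parts hq] at h
  exact Partition.ext <| Multiset.eq_of_cons_pred_erase_eq p.minPart_mem q.minPart_mem
    (p.parts_pos p.minPart_mem) (q.parts_pos q.minPart_mem) (fun _ => p.minPart_le)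
    (fun _ => q.minPart_le) h

theorem decMinPart_nodup {p : (n + 1).Partition} (h : 1 ∉ p.parts) (hp : p.parts.Nodup) :
    p.decMinPart.parts.Nodup := by
  rw [decMinPart_parts h, Multiset.nodup_cons]
  refine ⟨fun hm => ?_, hp.erase _⟩
  have := p.minPart_le (Multiset.mem_of_mem_erase hm)
  have := two_le_minPart h
  omega

theorem one_notMem_decMinPart {p : (n + 1).Partition} (h1 : 1 ∉ p.parts) (h2 : 2 ∉ p.parts) :
    1 ∉ p.decMinPart.parts := by
  rw [decMinPart_parts h1, Multiset.mem_cons]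
  rintro (hm | hm)
  · have := two_le_minPart h1
    have := p.minPart_mem.ne_of_notMem h2
    omega
  · exact h1 (Multiset.mem_of_mem_erase hm)

def consPart (q : n.Partition) {a : ℕ} (ha : 0 < a) : (n + a).Partition where
  parts := a ::ₘ q.parts
  parts_pos hi := (Multiset.mem_cons.mp hi).elim (· ▸ ha) q.parts_pos
  parts_sum := by simp [q.parts_sum, add_comm]

theorem card_filter_mem_parts_le {a : ℕ} (ha : 0 < a) {s : Finset (n + a).Partition}
    {t : Finset n.Partition} (hst : ∀ q : n.Partition, q.consPart ha ∈ s → q ∈ t) :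
    #{p ∈ s | a ∈ p.parts} ≤ #t := by
  refine card_le_card_of_surjOn (consPart · ha) fun p hp => ?_
  obtain ⟨hps, hap⟩ := mem_filter.mp hp
  let q : n.Partition :=
    { parts := p.parts.erase a
      parts_pos := fun hi => p.parts_pos (Multiset.mem_of_mem_erase hi)
      parts_sum := by
        have := congrArg Multiset.sum (Multiset.cons_erase hap)
        simp only [Multiset.sum_cons, p.parts_sum] at this
        omega }
  have hqp : q.consPart ha = p := Partition.ext (Multiset.cons_erase hap)
  exact ⟨q, hst q (hqp ▸ hps), hqp⟩

theorem eq_indiscrete_of_forall_le (p : n.Partition) {c : ℕ} (hc : ∀ i ∈ p.parts, c ≤ i)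
    (hn : n < 2 * c) : p = indiscrete n := by
  have hcard : Multiset.card p.parts * c ≤ n := by
    simpa [p.parts_sum] using Multiset.card_nsmul_le_sum hc
  obtain hcard | hcard : Multiset.card p.parts = 0 ∨ Multiset.card p.parts = 1 := by
    rcases Nat.lt_or_ge (Multiset.card p.parts) 2 with h | h
    · omega
    · nlinarith
  · have h0 : p.parts = 0 := Multiset.card_eq_zero.mp hcard
    obtain rfl : n = 0 := by simpa [h0] using p.parts_sum.symm
    exact Subsingleton.elim _ _
  · obtain ⟨x, hx⟩ := Multiset.card_eq_one.mp hcard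
    obtain rfl : x = n := by simpa [hx] using p.parts_sum
    ext1
    rw [hx, indiscrete_parts (p.parts_pos (hx ▸ Multiset.mem_singleton_self _)).ne']

theorem card_le_one_of_forall_le {s : Finset n.Partition} {c : ℕ}
    (hs : ∀ p ∈ s, ∀ i ∈ p.parts, c ≤ i) (hn : n < 2 * c) : #s ≤ 1 :=
  card_le_one.mpr fun p hp q hq =>
    (eq_indiscrete_of_forall_le p (hs p hp) hn).trans
      (eq_indiscrete_of_forall_le q (hs q hq) hn).symm

theorem card_filter_distincts_one_notMem_le :
    #{p ∈ distincts (n + 1) | 1 ∉ p.parts} ≤ #(distincts n) := by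
  refine card_le_card_of_injOn decMinPart (fun p hp => ?_)
    (decMinPart_injOn.mono fun p hp => (mem_filter.mp hp).2)
  obtain ⟨hpd, h1⟩ := mem_filter.mp hp
  exact mem_filter.mpr ⟨mem_univ _, decMinPart_nodup h1 (mem_filter.mp hpd).2⟩

theorem card_filter_distincts_one_mem_le :
    #{p ∈ distincts (n + 1) | 1 ∈ p.parts} ≤ #{p ∈ distincts n | 1 ∉ p.parts} := by
  refine card_filter_mem_parts_le one_pos fun q hq => ?_
  simp only [distincts, consPart, mem_filter, mem_univ, true_and, Multiset.nodup_cons] at hq ⊢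
  exact hq.symm

theorem card_distincts_succ_le_two_mul : #(distincts (n + 1)) ≤ 2 * #(distincts n) := by
  rw [← card_filter_add_card_filter_not (p := fun p => 1 ∈ p.parts)]
  have := card_filter_distincts_one_mem_le (n := n)
  have := card_filter_le (distincts n) (fun p => 1 ∉ p.parts)
  have := card_filter_distincts_one_notMem_le (n := n)
  omega

theorem card_distincts_succ_le : #(distincts (n + 1)) ≤ #(noOnes n) + #(noOnes (n + 1)) := by
  rw [← card_filter_add_card_filter_not (p := fun p => 1 ∈ p.parts)]
  exact add_le_add (card_filter_distincts_one_mem_le.trans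
    (card_le_card (filter_subset_filter _ (subset_univ _))))
    (card_le_card (filter_subset_filter _ (subset_univ _)))

theorem card_noOnes_add_two_le_add_card_filter :
    #(noOnes (n + 2)) ≤ #(noOnes n) + #{p ∈ noOnes (n + 2) | 2 ∉ p.parts} := by
  rw [← card_filter_add_card_filter_not (p := fun p => 2 ∈ p.parts)]
  refine add_le_add (card_filter_mem_parts_le two_pos fun q hq => ?_) le_rfl
  simp only [noOnes, consPart, mem_filter, mem_univ, true_and, Multiset.mem_cons, not_or] at hq ⊢
  exact hq.2

theorem card_filter_noOnes_two_notMem_le :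
    #{p ∈ noOnes (n + 2) | 2 ∉ p.parts} ≤ #(noOnes (n + 1)) := by
  refine card_le_card_of_injOn decMinPart (fun p hp => ?_)
    (decMinPart_injOn.mono fun p hp => (mem_filter.mp (mem_filter.mp hp).1).2)
  obtain ⟨hpq, h2⟩ := mem_filter.mp hp
  exact mem_filter.mpr ⟨mem_univ _, one_notMem_decMinPart (mem_filter.mp hpq).2 h2⟩

theorem card_noOnes_add_two_le : #(noOnes (n + 2)) ≤ #(noOnes (n + 1)) + #(noOnes n) := by
  have := card_noOnes_add_two_le_add_card_filter (n := n)
  have := card_filter_noOnes_two_notMem_le (n := n)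
  omega

theorem one_le_card_distincts : 1 ≤ #(distincts n) := by
  refine Finset.card_pos.mpr ⟨indiscrete n, mem_filter.mpr ⟨mem_univ _, ?_⟩⟩
  rcases eq_or_ne n 0 with rfl | hn
  · simp
  · simp [indiscrete_parts hn]

theorem one_le_card_noOnes (hn : n ≠ 1) : 1 ≤ #(noOnes n) := by
  refine Finset.card_pos.mpr ⟨indiscrete n, mem_filter.mpr ⟨mem_univ _, ?_⟩⟩
  rcases eq_or_ne n 0 with rfl | hn0
  · simp
  · simp [indiscrete_parts hn0, Ne.symm hn]

theorem card_noOnes_one : #(noOnes 1) = 0 := by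
  simp [noOnes]

theorem card_noOnes_le_one (hn : n < 4) : #(noOnes n) ≤ 1 :=
  card_le_one_of_forall_le (c := 2) (fun p hp i hi => by
    have := p.parts_pos hi
    have := hi.ne_of_notMem (mem_filter.mp hp).2
    omega) hn

theorem card_filter_noOnes_two_notMem_le_one (hn : n < 6) :
    #{p ∈ noOnes n | 2 ∉ p.parts} ≤ 1 :=
  card_le_one_of_forall_le (c := 3) (fun p hp i hi => by
    have := p.parts_pos hi
    have := hi.ne_of_notMem (mem_filter.mp (mem_filter.mp hp).1).2
    have := hi.ne_of_notMem (mem_filter.mp hp).2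
    omega) hn

theorem card_noOnes_add_two_le_two (hn : n < 4) : #(noOnes (n + 2)) ≤ 2 := by
  have := card_noOnes_add_two_le_add_card_filter (n := n)
  have := card_noOnes_le_one hn
  have := card_filter_noOnes_two_notMem_le_one (n := n + 2) (by omega)
  omega

theorem card_distincts_zero : #(distincts 0) = 1 :=
  le_antisymm ((card_le_univ _).trans_eq Fintype.card_unique) one_le_card_distincts

theorem card_distincts_one : #(distincts 1) = 1 :=
  le_antisymm ((card_le_univ _).trans_eq Fintype.card_unique) one_le_card_distincts

theorem card_distincts_two : #(distincts 2) = 1 := by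
  have : #(distincts 2) ≤ #(noOnes 1) + #(noOnes 2) := card_distincts_succ_le
  have := card_noOnes_le_one (n := 2) (by norm_num)
  have := one_le_card_distincts (n := 2)
  rw [card_noOnes_one] at *
  omega

theorem card_distincts_four_le : #(distincts 4) ≤ 3 := by
  have : #(distincts 4) ≤ #(noOnes 3) + #(noOnes 4) := card_distincts_succ_le
  have := card_noOnes_le_one (n := 3) (by norm_num)
  have : #(noOnes 4) ≤ 2 := card_noOnes_add_two_le_two (by norm_num)
  omega

theorem card_partition_two : Fintype.card (Partition 2) = 2 := by
  have hone : #{p : Partition (1 + 1) | 1 ∈ p.parts} = 1 := by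
    refine le_antisymm ((card_filter_mem_parts_le one_pos (t := univ) fun _ _ => mem_univ _).trans_eq
      (Finset.card_univ.trans Fintype.card_unique)) ?_
    exact Finset.card_pos.mpr ⟨consPart default one_pos,
      mem_filter.mpr ⟨mem_univ _, by simp [consPart]⟩⟩
  have hnoOnes : #(noOnes 2) = 1 :=
    le_antisymm (card_noOnes_le_one (by norm_num)) (one_le_card_noOnes (by norm_num))
  rw [← Finset.card_univ, ← card_filter_add_card_filter_not (p := fun p : Partition 2 => 1 ∈ p.parts)]
  exact congrArg₂ (· + ·) hone hnoOnes

end Nat.Partition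

open Nat.Partition

theorem overp_two : overp 2 = 4 := by
  rw [overp, Finset.Nat.sum_antidiagonal_eq_sum_range_succ_mk]
  simp [sum_range_succ, card_distincts_zero, card_distincts_one, card_distincts_two,
    card_partition_two]

theorem overpNo_one_eq (n : ℕ) :
    overpNo 1 n = ∑ k ∈ range (n + 1), #(distincts k) * #(noOnes (n - k)) :=
  Finset.Nat.sum_antidiagonal_eq_sum_range_succ_mk _ n

theorem overpNo_one_add_two (n : ℕ) :
    overpNo 1 (n + 2) = #(noOnes (n + 2)) + #(noOnes (n + 1)) +
      ∑ k ∈ range (n + 1), #(distincts (k + 2)) * #(noOnes (n - k)) := by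
  rw [overpNo_one_eq, sum_range_succ', sum_range_succ', card_distincts_zero, card_distincts_one]
  rw [sum_congr rfl fun k _ => by rw [show n + 2 - (k + 1 + 1) = n - k by omega],
    show n + 2 - (0 + 1) = n + 1 by omega, Nat.sub_zero]
  ring

theorem sum_distincts_add_two_mul_le {n : ℕ} (hn : 2 ≤ n) :
    ∑ k ∈ range (n + 1), #(distincts (k + 2)) * #(noOnes (n - k)) +
        (3 * #(noOnes n) + 2 * #(noOnes (n - 1)) + #(noOnes (n - 2))) ≤
      4 * ∑ k ∈ range (n + 1), #(distincts k) * #(noOnes (n - k)) := by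
  obtain ⟨m, rfl⟩ := Nat.exists_eq_add_of_le' hn
  have hstep (k : ℕ) : #(distincts (k + 2)) ≤ 4 * #(distincts k) := by
    have := card_distincts_succ_le_two_mul (n := k)
    have : #(distincts (k + 2)) ≤ 2 * #(distincts (k + 1)) := card_distincts_succ_le_two_mul
    omega
  have htail : ∑ k ∈ range m, #(distincts (3 + k + 2)) * #(noOnes (m + 2 - (3 + k))) ≤
      4 * ∑ k ∈ range m, #(distincts (3 + k)) * #(noOnes (m + 2 - (3 + k))) := by
    rw [mul_sum]
    exact sum_le_sum fun k _ => by rw [← mul_assoc]; exact Nat.mul_le_mul_right _ (hstep _)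
  have h2 : #(distincts (0 + 2)) = 1 := card_distincts_two
  have h3 : #(distincts (1 + 2)) * #(noOnes (m + 2 - 1)) ≤ 2 * #(noOnes (m + 2 - 1)) := by
    refine Nat.mul_le_mul_right _ ?_
    simpa [card_distincts_two] using card_distincts_succ_le_two_mul (n := 2)
  have h4 : #(distincts (2 + 2)) * #(noOnes (m + 2 - 2)) ≤ 3 * #(noOnes (m + 2 - 2)) :=
    Nat.mul_le_mul_right _ card_distincts_four_le
  rw [show m + 2 + 1 = 3 + m by omega, sum_range_add, sum_range_add, mul_add]
  simp only [sum_range_succ, sum_range_zero, card_distincts_zero, card_distincts_one, h2]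
  rw [Nat.sub_zero]
  omega

theorem card_noOnes_add_two_add_lt {n : ℕ} (hn : 2 ≤ n) :
    #(noOnes (n + 2)) + #(noOnes (n + 1)) <
      3 * #(noOnes n) + 2 * #(noOnes (n - 1)) + #(noOnes (n - 2)) := by
  obtain ⟨m, rfl⟩ := Nat.exists_eq_add_of_le' hn
  rcases eq_or_ne m 1 with rfl | hm
  · show #(noOnes 5) + #(noOnes 4) < 3 * #(noOnes 3) + 2 * #(noOnes 2) + #(noOnes 1)
    have : #(noOnes 5) ≤ 2 := card_noOnes_add_two_le_two (by norm_num)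
    have : #(noOnes 4) ≤ 2 := card_noOnes_add_two_le_two (by norm_num)
    have : 1 ≤ #(noOnes 3) := one_le_card_noOnes (by norm_num)
    have : 1 ≤ #(noOnes 2) := one_le_card_noOnes (by norm_num)
    omega
  · have : #(noOnes (m + 2 + 2)) ≤ #(noOnes (m + 2 + 1)) + #(noOnes (m + 2)) :=
      card_noOnes_add_two_le
    have : #(noOnes (m + 2 + 1)) ≤ #(noOnes (m + 2)) + #(noOnes (m + 2 - 1)) :=
      card_noOnes_add_two_le (n := m + 1)
    have : 1 ≤ #(noOnes (m + 2 - 2)) := one_le_card_noOnes (by omega)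
    omega

theorem overpNo1_mul_p2 (a : ℕ) (ha : 2 ≤ a) :
    overpNo 1 (a + 2) < overpNo 1 a * overp 2 := by
  rw [overp_two, overpNo_one_add_two, overpNo_one_eq]
  have := sum_distincts_add_two_mul_le ha
  have := card_noOnes_add_two_add_lt ha
  omega
end

section
/- For all integers a ≥ b ≥ 1 except (a,b) = (1,1) and (2,1), p̄(a | no 1's)·p̄(b) > p̄(a+b | no 1's). -/
/-!
An overpartition is encoded by the multiset of its codes: `2 * t` for an overlined part `t` and
`2 * t + 1` for a non-overlined part `t`. A code `c` has weight `c / 2`; a multiset of codes comes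
from an overpartition iff all codes are at least `2` and the even ones are distinct, and "no
non-overlined 1" means that `3` is not a code.

An overpartition `λ` of `a + b` without non-overlined 1's is split injectively into a pair
`(μ, ν)` counted by `p̄(a | no 1's) · p̄(b)`: `ν` takes the smallest parts of `λ` up to a total
`w ≤ b`, and the deficit `r = b - w` is made up by `r` non-overlined 1's cut off the next part of
`λ`, whose weight exceeds `r`. Everything else stays in `μ`. For each admissible `(a, b)` one pair
is missed, typically `ν = 1 + ⋯ + 1` with a `μ` whose two smallest codes are too close to come
from a part that has just lost `b` units.
-/

open Finset

namespace OverpCode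

def weight (M : Multiset ℕ) : ℕ := (M.map (· / 2)).sum

@[simp] lemma weight_zero : weight 0 = 0 := rfl

@[simp] lemma weight_add (A B : Multiset ℕ) : weight (A + B) = weight A + weight B := by
  simp [weight]

@[simp] lemma weight_cons (c : ℕ) (M : Multiset ℕ) : weight (c ::ₘ M) = c / 2 + weight M := by
  simp [weight]

@[simp] lemma weight_singleton (c : ℕ) : weight {c} = c / 2 := by simp [weight]

@[simp] lemma weight_replicate (k c : ℕ) :
    weight (Multiset.replicate k c) = k * (c / 2) := by
  simp [weight, Multiset.map_replicate]

def Valid (M : Multiset ℕ) : Prop :=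
  (∀ c ∈ M, 2 ≤ c) ∧ (M.filter (· % 2 = 0)).Nodup

def encode (D P : Multiset ℕ) : Multiset ℕ := D.map (2 * ·) + P.map (2 * · + 1)

def evenHalf (M : Multiset ℕ) : Multiset ℕ := (M.filter (· % 2 = 0)).map (· / 2)

def oddHalf (M : Multiset ℕ) : Multiset ℕ := (M.filter (¬ · % 2 = 0)).map (· / 2)

lemma filter_even_encode (D P : Multiset ℕ) :
    (encode D P).filter (· % 2 = 0) = D.map (2 * ·) := by
  rw [encode, Multiset.filter_add, Multiset.filter_eq_self.2 (by simp),
    Multiset.filter_eq_nil.2 (by simp), add_zero]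

lemma evenHalf_encode (D P : Multiset ℕ) : evenHalf (encode D P) = D := by
  rw [evenHalf, filter_even_encode, Multiset.map_map]
  exact (Multiset.map_congr rfl fun t _ => by simp).trans (Multiset.map_id D)

lemma oddHalf_encode (D P : Multiset ℕ) : oddHalf (encode D P) = P := by
  rw [oddHalf, encode, Multiset.filter_add, Multiset.filter_eq_nil.2 (by simp),
    Multiset.filter_eq_self.2 (by simp), zero_add, Multiset.map_map]
  exact (Multiset.map_congr rfl fun t _ => by simp; omega).trans (Multiset.map_id P)

lemma encode_halves (M : Multiset ℕ) : encode (evenHalf M) (oddHalf M) = M := by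
  rw [encode, evenHalf, oddHalf, Multiset.map_map, Multiset.map_map]
  conv_rhs => rw [← Multiset.filter_add_not (· % 2 = 0) M]
  congr 1 <;> refine (Multiset.map_congr rfl fun c hc => ?_).trans (Multiset.map_id _) <;>
    have := (Multiset.mem_filter.1 hc).2 <;> simp only [Function.comp_apply, id] <;> omega

lemma weight_encode (D P : Multiset ℕ) : weight (encode D P) = D.sum + P.sum := by
  have h₁ : ∀ t : ℕ, 2 * t / 2 = t := fun t => by omega
  have h₂ : ∀ t : ℕ, (2 * t + 1) / 2 = t := fun t => by omega
  simp [weight, encode, h₁, h₂]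

abbrev PartitionPair := Σ ij : ℕ × ℕ, Nat.Partition ij.1 × Nat.Partition ij.2

def pairs (Q : Multiset ℕ → Prop) [DecidablePred Q] (n : ℕ) : Finset PartitionPair :=
  (antidiagonal n).sigma fun ij =>
    Nat.Partition.distincts ij.1 ×ˢ univ.filter fun P : Nat.Partition ij.2 => Q P.parts

lemma mem_pairs {Q : Multiset ℕ → Prop} [DecidablePred Q] {n : ℕ} {x : PartitionPair} :
    x ∈ pairs Q n ↔ x.1.1 + x.1.2 = n ∧ x.2.1.parts.Nodup ∧ Q x.2.2.parts := by
  simp [pairs, Nat.Partition.distincts]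

def codeOf (x : PartitionPair) : Multiset ℕ := encode x.2.1.parts x.2.2.parts

lemma codeOf_injective : Function.Injective codeOf := by
  rintro ⟨⟨i₁, j₁⟩, D₁, P₁⟩ ⟨⟨i₂, j₂⟩, D₂, P₂⟩ h
  have hD : D₁.parts = D₂.parts := by
    rw [← evenHalf_encode D₁.parts P₁.parts, ← evenHalf_encode D₂.parts P₂.parts]
    exact congrArg evenHalf h
  have hP : P₁.parts = P₂.parts := by
    rw [← oddHalf_encode D₁.parts P₁.parts, ← oddHalf_encode D₂.parts P₂.parts]
    exact congrArg oddHalf h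
  obtain rfl : i₁ = i₂ := by
    have h₁ := D₁.parts_sum
    rw [hD, D₂.parts_sum] at h₁
    exact h₁.symm
  obtain rfl : j₁ = j₂ := by
    have h₁ := P₁.parts_sum
    rw [hP, P₂.parts_sum] at h₁
    exact h₁.symm
  rw [Nat.Partition.ext hD, Nat.Partition.ext hP]

def codes (Q : Multiset ℕ → Prop) [DecidablePred Q] (n : ℕ) : Finset (Multiset ℕ) :=
  (pairs Q n).image codeOf

lemma card_codes (Q : Multiset ℕ → Prop) [DecidablePred Q] (n : ℕ) :
    (codes Q n).card = ∑ ij ∈ antidiagonal n, (Nat.Partition.distincts ij.1).card *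
      (univ.filter fun P : Nat.Partition ij.2 => Q P.parts).card := by
  rw [codes, card_image_of_injective _ codeOf_injective, pairs, card_sigma]
  simp only [card_product]

lemma valid_encode {D P : Multiset ℕ} (hD : D.Nodup) (hD0 : ∀ t ∈ D, 0 < t)
    (hP0 : ∀ t ∈ P, 0 < t) : Valid (encode D P) := by
  refine ⟨fun c hc => ?_, ?_⟩
  · rcases Multiset.mem_add.1 hc with hc | hc <;> obtain ⟨t, ht, rfl⟩ := Multiset.mem_map.1 hc
    · have := hD0 t ht; omega
    · have := hP0 t ht; omega
  · rw [filter_even_encode]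
    exact hD.map fun _ _ h => by omega

lemma mem_codes {Q : Multiset ℕ → Prop} [DecidablePred Q] {n : ℕ} {M : Multiset ℕ} :
    M ∈ codes Q n ↔ Valid M ∧ weight M = n ∧ Q (oddHalf M) := by
  constructor
  · intro hM
    obtain ⟨x, hx, rfl⟩ := Finset.mem_image.1 hM
    rw [mem_pairs] at hx
    refine ⟨valid_encode hx.2.1 (fun _ => x.2.1.parts_pos) (fun _ => x.2.2.parts_pos), ?_, ?_⟩
    · rw [codeOf, weight_encode, x.2.1.parts_sum, x.2.2.parts_sum, hx.1]
    · rw [codeOf, oddHalf_encode]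
      exact hx.2.2
  · rintro ⟨⟨hpos, hnodup⟩, rfl, hQ⟩
    have hpos' : ∀ N ≤ M, ∀ {t}, t ∈ N.map (· / 2) → 0 < t := fun N hN t ht => by
      obtain ⟨c, hc, rfl⟩ := Multiset.mem_map.1 ht
      have := hpos c (Multiset.mem_of_le hN hc)
      omega
    let D : Nat.Partition (evenHalf M).sum :=
      ⟨evenHalf M, hpos' _ (Multiset.filter_le _ _), rfl⟩
    let P : Nat.Partition (oddHalf M).sum := ⟨oddHalf M, hpos' _ (Multiset.filter_le _ _), rfl⟩
    refine Finset.mem_image.2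
      ⟨⟨((evenHalf M).sum, (oddHalf M).sum), D, P⟩, ?_, encode_halves M⟩
    refine mem_pairs.2 ⟨?_, hnodup.map_on fun x hx y hy h => ?_, hQ⟩
    · rw [← weight_encode, encode_halves]
    · have := (Multiset.mem_filter.1 hx).2
      have := (Multiset.mem_filter.1 hy).2
      omega

lemma card_codes_true (n : ℕ) : (codes (fun _ => True) n).card = overp n := by
  simp only [card_codes, filter_true, card_univ, overp]

lemma card_codes_one_not_mem (n : ℕ) : (codes (1 ∉ ·) n).card = overpNo 1 n :=
  card_codes _ n

lemma one_mem_oddHalf {M : Multiset ℕ} : 1 ∈ oddHalf M ↔ 3 ∈ M := by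
  simp only [oddHalf, Multiset.mem_map, Multiset.mem_filter]
  constructor
  · rintro ⟨c, ⟨hc, hodd⟩, h⟩
    obtain rfl : c = 3 := by omega
    exact hc
  · exact fun h => ⟨3, ⟨h, by norm_num⟩, rfl⟩

lemma valid_zero : Valid 0 := ⟨by simp, by simp⟩

lemma Valid.mono {X Y : Multiset ℕ} (hY : Valid Y) (h : X ≤ Y) : Valid X :=
  ⟨fun c hc => hY.1 c (Multiset.mem_of_le h hc),
    Multiset.nodup_of_le (Multiset.filter_le_filter _ h) hY.2⟩

lemma Valid.cons {X : Multiset ℕ} {a : ℕ} (hX : Valid X) (ha : 2 ≤ a)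
    (hnot : a % 2 = 0 → a ∉ X) : Valid (a ::ₘ X) := by
  refine ⟨fun c hc => (Multiset.mem_cons.1 hc).elim (· ▸ ha) (hX.1 c), ?_⟩
  rw [Multiset.filter_cons]
  split_ifs with hev
  · exact Multiset.nodup_cons.2 ⟨fun hmem => hnot hev (Multiset.mem_of_mem_filter hmem), hX.2⟩
  · simpa using hX.2

lemma Valid.add_replicate_three {X : Multiset ℕ} (hX : Valid X) (k : ℕ) :
    Valid (X + Multiset.replicate k 3) := by
  refine ⟨fun c hc => ?_, ?_⟩
  · rcases Multiset.mem_add.1 hc with hc | hc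
    · exact hX.1 c hc
    · rw [Multiset.eq_of_mem_replicate hc]; omega
  · have hodd : (Multiset.replicate k 3).filter (· % 2 = 0) = 0 :=
      Multiset.filter_eq_nil.2 fun x hx => by rw [Multiset.eq_of_mem_replicate hx]; omega
    rw [Multiset.filter_add, hodd, add_zero]
    exact hX.2

noncomputable def cut (b : ℕ) (M : Multiset ℕ) : ℕ :=
  sInf {t | b < weight (M.filter (· ≤ t))}

noncomputable def lows (b : ℕ) (M : Multiset ℕ) : Multiset ℕ := M.filter (· < cut b M)

noncomputable def cutCopies (b : ℕ) (M : Multiset ℕ) : ℕ :=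
  (b - weight (lows b M)) / (cut b M / 2)

noncomputable def rem (b : ℕ) (M : Multiset ℕ) : ℕ :=
  (b - weight (lows b M)) % (cut b M / 2)

noncomputable def pre (b : ℕ) (M : Multiset ℕ) : Multiset ℕ :=
  lows b M + Multiset.replicate (cutCopies b M) (cut b M)

noncomputable def suf (b : ℕ) (M : Multiset ℕ) : Multiset ℕ := M - pre b M

structure Splittable (b : ℕ) (M : Multiset ℕ) : Prop where
  one_le : 1 ≤ b
  valid : Valid M
  three_not_mem : 3 ∉ M
  lt_weight : b < weight M

lemma count_le_one_of_even {M : Multiset ℕ} (hM : Valid M) {c : ℕ} (hc : c % 2 = 0) :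
    M.count c ≤ 1 := by
  have := Multiset.nodup_iff_count_le_one.1 hM.2 c
  rwa [Multiset.count_filter, if_pos hc] at this

section Cut

variable {b : ℕ} {M : Multiset ℕ}

lemma lt_weight_filter_le_cut (hlt : b < weight M) : b < weight (M.filter (· ≤ cut b M)) := by
  have hne : {t | b < weight (M.filter (· ≤ t))}.Nonempty := ⟨M.sum, by
    show b < _
    rwa [Multiset.filter_eq_self.2 fun x hx => Multiset.le_sum_of_mem hx]⟩
  exact Nat.sInf_mem hne

lemma weight_lows_le : weight (lows b M) ≤ b := by
  by_contra! hgt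
  have hpos : 0 < cut b M := by
    by_contra! h0
    simp [lows, show cut b M = 0 by omega] at hgt
  have hmem : cut b M - 1 ∈ {t | b < weight (M.filter (· ≤ t))} := by
    have heq : M.filter (· ≤ cut b M - 1) = lows b M := Multiset.filter_congr fun x _ => by omega
    show b < _
    rwa [heq]
  have : cut b M ≤ cut b M - 1 := Nat.sInf_le hmem
  omega

lemma weight_filter_le_cut :
    weight (M.filter (· ≤ cut b M)) = weight (lows b M) + M.count (cut b M) * (cut b M / 2) := by
  have hsplit : M.filter (· ≤ cut b M) =
      lows b M + Multiset.replicate (M.count (cut b M)) (cut b M) := by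
    ext x
    rw [Multiset.count_add, lows, Multiset.count_filter, Multiset.count_filter,
      Multiset.count_replicate]
    split_ifs <;> simp_all <;> omega
  rw [hsplit, weight_add, weight_replicate]

lemma cut_mem (hlt : b < weight M) : cut b M ∈ M := by
  by_contra h
  have := lt_weight_filter_le_cut hlt
  rw [weight_filter_le_cut, Multiset.count_eq_zero.2 h, zero_mul, add_zero] at this
  exact absurd this (not_lt.2 weight_lows_le)

lemma four_le_cut (h : Splittable b M) : 4 ≤ cut b M := by
  have hmem := cut_mem h.lt_weight
  have h2 := h.valid.1 _ hmem
  have hne3 : cut b M ≠ 3 := fun h3 => h.three_not_mem (h3 ▸ hmem)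
  suffices cut b M ≠ 2 by omega
  intro h2
  have hlows : lows b M = 0 := Multiset.filter_eq_nil.2 fun x hx => by
    have := h.valid.1 x hx; omega
  have hs := lt_weight_filter_le_cut h.lt_weight
  have hcount := count_le_one_of_even h.valid (c := 2) rfl
  rw [weight_filter_le_cut, hlows, h2] at hs
  have := h.one_le
  simp at hs
  omega

lemma weight_lows_add_cutCopies :
    weight (lows b M) + cutCopies b M * (cut b M / 2) + rem b M = b := by
  have := Nat.div_add_mod' (b - weight (lows b M)) (cut b M / 2)
  have := weight_lows_le (b := b) (M := M)
  rw [cutCopies, rem]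
  omega

lemma weight_pre_add_rem : weight (pre b M) + rem b M = b := by
  rw [pre, weight_add, weight_replicate, weight_lows_add_cutCopies]

lemma rem_lt (h : Splittable b M) : rem b M < cut b M / 2 :=
  Nat.mod_lt _ (by have := four_le_cut h; omega)

lemma cutCopies_lt_count (h : Splittable b M) : cutCopies b M < M.count (cut b M) := by
  have hlt := lt_weight_filter_le_cut h.lt_weight
  rw [weight_filter_le_cut] at hlt
  have := weight_lows_add_cutCopies (b := b) (M := M)
  have := rem_lt h
  by_contra! hle
  have := Nat.mul_le_mul_right (cut b M / 2) hle
  omega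

lemma pre_le (h : Splittable b M) : pre b M ≤ M := by
  have hrep :
      Multiset.replicate (cutCopies b M) (cut b M) ≤ M.filter (fun x => ¬ x < cut b M) := by
    rw [← Multiset.le_count_iff_replicate_le,
      Multiset.count_filter_of_pos (p := fun x => ¬ x < cut b M) (lt_irrefl _)]
    exact (cutCopies_lt_count h).le
  calc pre b M ≤ lows b M + M.filter (fun x => ¬ x < cut b M) := add_le_add_right hrep _
    _ = M := Multiset.filter_add_not _ M

lemma suf_le : suf b M ≤ M := Multiset.sub_le_self _ _

lemma suf_add_pre (h : Splittable b M) : suf b M + pre b M = M :=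
  tsub_add_cancel_of_le (pre_le h)

lemma cut_le_of_mem_suf {x : ℕ} (hx : x ∈ suf b M) : cut b M ≤ x := by
  by_contra! hlt
  rw [← Multiset.count_pos, suf, Multiset.count_sub, pre, Multiset.count_add, lows,
    Multiset.count_filter_of_pos (p := (· < cut b M)) hlt] at hx
  omega

lemma cut_mem_suf (h : Splittable b M) : cut b M ∈ suf b M := by
  have := cutCopies_lt_count h
  rw [← Multiset.count_pos, suf, Multiset.count_sub, pre, Multiset.count_add, lows,
    Multiset.count_filter_of_neg (p := (· < cut b M)) (lt_irrefl _),
    Multiset.count_replicate_self]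
  omega

lemma cut_not_mem_pre (h : Splittable b M) (hev : cut b M % 2 = 0) : cut b M ∉ pre b M := by
  have := cutCopies_lt_count h
  have := count_le_one_of_even h.valid hev
  rw [pre, show cutCopies b M = 0 by omega, Multiset.replicate_zero, add_zero, lows,
    Multiset.mem_filter]
  exact fun h => lt_irrefl _ h.2

lemma two_mem_pre (h : Splittable b M) (h2 : 2 ∈ M) : 2 ∈ pre b M :=
  Multiset.mem_add.2 <| .inl <| Multiset.mem_filter.2 ⟨h2, by have := four_le_cut h; omega⟩

end Cut

/-- When the cut part would shrink to weight `1`, `μ` receives an overlined `1` (code `2`)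
instead, and `ν` records the cut part: whole in exchange for its own overlined `1`, or through
its parity (`r` threes if even, an overlined `1` and `r - 1` threes if odd). -/
noncomputable def split (b : ℕ) (M : Multiset ℕ) : Multiset ℕ × Multiset ℕ :=
  if rem b M = 0 then (suf b M, pre b M)
  else if 2 ≤ cut b M / 2 - rem b M then
    ((cut b M - 2 * rem b M) ::ₘ (suf b M).erase (cut b M),
      pre b M + Multiset.replicate (rem b M) 3)
  else if 2 ∈ M then (2 ::ₘ (suf b M).erase (cut b M), cut b M ::ₘ (pre b M).erase 2)
  else if cut b M % 2 = 0 then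
    (2 ::ₘ (suf b M).erase (cut b M), pre b M + Multiset.replicate (rem b M) 3)
  else (2 ::ₘ (suf b M).erase (cut b M), 2 ::ₘ (pre b M + Multiset.replicate (rem b M - 1) 3))

-- In the last branch of `split`, the cut part is `2 * r + 3` and `ν` carries `r - 1` threes.
noncomputable def merge (p : Multiset ℕ × Multiset ℕ) : Multiset ℕ :=
  if 2 ∈ p.1 ∧ 2 ∈ p.2 then
    (2 * p.2.count 3 + 5) ::ₘ (p.1.erase 2 + (p.2.erase 2 - Multiset.replicate (p.2.count 3) 3))
  else (sInf {x | x ∈ p.1} + 2 * p.2.count 3) ::ₘ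
    (p.1.erase (sInf {x | x ∈ p.1}) + (p.2 - Multiset.replicate (p.2.count 3) 3))

lemma merge_of_least {μ ν X : Multiset ℕ} {m : ℕ} (h2 : ¬ (2 ∈ μ ∧ 2 ∈ ν))
    (hμ : μ = m ::ₘ X) (hX : ∀ y ∈ X, m ≤ y) :
    merge (μ, ν) = (m + 2 * ν.count 3) ::ₘ (X + (ν - Multiset.replicate (ν.count 3) 3)) := by
  have hleast : sInf {x | x ∈ μ} = m := by
    refine IsLeast.csInf_eq ⟨by simp [hμ], fun y hy => ?_⟩
    rcases Multiset.mem_cons.1 (hμ ▸ hy) with rfl | hy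
    · exact le_rfl
    · exact hX y hy
  rw [merge, if_neg h2, hleast, hμ, Multiset.erase_cons_head]

section Split

variable {b : ℕ} {M : Multiset ℕ}

lemma four_le_of_mem_suf (h : Splittable b M) {x : ℕ} (hx : x ∈ suf b M) : 4 ≤ x :=
  (four_le_cut h).trans (cut_le_of_mem_suf hx)

lemma cut_le_of_mem_erase_suf {x : ℕ} (hx : x ∈ (suf b M).erase (cut b M)) : cut b M ≤ x :=
  cut_le_of_mem_suf (Multiset.mem_of_mem_erase hx)

lemma cons_erase_suf (h : Splittable b M) :
    cut b M ::ₘ (suf b M).erase (cut b M) = suf b M :=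
  Multiset.cons_erase (cut_mem_suf h)

lemma count_three_pre (h : Splittable b M) : (pre b M).count 3 = 0 :=
  Multiset.count_eq_zero.2 fun h3 => h.three_not_mem (Multiset.mem_of_le (pre_le h) h3)

lemma two_not_mem_erase_pre (h : Splittable b M) : 2 ∉ (pre b M).erase 2 := by
  rw [← Multiset.count_pos, Multiset.count_erase_self]
  have := Multiset.count_le_of_le 2 (pre_le h)
  have := count_le_one_of_even h.valid (c := 2) rfl
  omega

theorem merge_split (h : Splittable b M) : merge (split b M) = M := by
  have hc := four_le_cut h
  have hr := rem_lt h
  have h3 := count_three_pre h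
  have hS : ∀ y ∈ (suf b M).erase (cut b M), 4 ≤ y := fun y hy =>
    four_le_of_mem_suf h (Multiset.mem_of_mem_erase hy)
  have hM := suf_add_pre h
  rw [← cons_erase_suf h] at hM
  unfold split
  split_ifs with h0 h1 h2 hev
  · rw [merge_of_least (fun h2 => by have := four_le_of_mem_suf h h2.1; omega)
      (cons_erase_suf h).symm fun y hy => cut_le_of_mem_erase_suf hy]
    simpa [h3] using hM
  · have h2μ : 2 ∉ (cut b M - 2 * rem b M) ::ₘ (suf b M).erase (cut b M) := fun h2 => by
      rcases Multiset.mem_cons.1 h2 with h2 | h2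
      · omega
      · have := hS 2 h2; omega
    rw [merge_of_least (fun h2 => h2μ h2.1) rfl fun y hy => by
      have := cut_le_of_mem_erase_suf hy; omega]
    simp only [Multiset.count_add, h3, Multiset.count_replicate_self, zero_add,
      add_tsub_cancel_right]
    rwa [Nat.sub_add_cancel (by omega), ← Multiset.cons_add]
  · have h3' : (cut b M ::ₘ (pre b M).erase 2).count 3 = 0 := by
      rw [Multiset.count_cons_of_ne (by omega), Multiset.count_erase_of_ne (by omega), h3]
    rw [merge_of_least (by simp [two_not_mem_erase_pre h]; omega) rfl fun y hy => by
      have := hS y hy; omega, h3']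
    conv_rhs => rw [← hM, ← Multiset.cons_erase (two_mem_pre h h2)]
    simp
  · have h2P : 2 ∉ pre b M + Multiset.replicate (rem b M) 3 := by
      simp only [Multiset.mem_add, Multiset.mem_replicate, not_or]
      exact ⟨fun h2P => h2 (Multiset.mem_of_le (pre_le h) h2P), by omega⟩
    rw [merge_of_least (by simp [h2P]) rfl fun y hy => by have := hS y hy; omega]
    simp only [Multiset.count_add, h3, Multiset.count_replicate_self, zero_add,
      add_tsub_cancel_right]
    rwa [show 2 + 2 * rem b M = cut b M by omega, ← Multiset.cons_add]
  · rw [merge, if_pos (by simp)]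
    simp only [Multiset.count_cons_of_ne (show (3 : ℕ) ≠ 2 by omega), Multiset.count_add, h3,
      Multiset.count_replicate_self, zero_add, Multiset.erase_cons_head, add_tsub_cancel_right]
    rwa [show 2 * (rem b M - 1) + 5 = cut b M by omega, ← Multiset.cons_add]

lemma weight_erase_suf (h : Splittable b M) :
    weight ((suf b M).erase (cut b M)) + cut b M / 2 + weight (pre b M) = weight M := by
  have hS := congrArg weight (cons_erase_suf h)
  have hM := congrArg weight (suf_add_pre h)
  rw [weight_cons] at hS
  rw [weight_add] at hM
  omega

theorem split_fst_mem_codes (h : Splittable b M) :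
    (split b M).1 ∈ codes (1 ∉ ·) (weight M - b) := by
  rw [mem_codes, one_mem_oddHalf]
  have hc := four_le_cut h
  have hr := rem_lt h
  have hwP := weight_pre_add_rem (b := b) (M := M)
  have hwS := weight_erase_suf h
  have hvS : Valid ((suf b M).erase (cut b M)) :=
    h.valid.mono ((Multiset.erase_le _ _).trans suf_le)
  have hS : ∀ y ∈ (suf b M).erase (cut b M), 4 ≤ y := fun y hy =>
    four_le_of_mem_suf h (Multiset.mem_of_mem_erase hy)
  unfold split
  split_ifs with h0 h1 <;> dsimp only
  · refine ⟨h.valid.mono suf_le, ?_, fun h3 => by have := four_le_of_mem_suf h h3; omega⟩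
    rw [← cons_erase_suf h, weight_cons]
    omega
  · refine ⟨hvS.cons (by omega) fun _ hmem => ?_, ?_, ?_⟩
    · have := cut_le_of_mem_erase_suf hmem; omega
    · rw [weight_cons]; omega
    · rw [Multiset.mem_cons, not_or]
      exact ⟨by omega, fun h3 => by have := hS 3 h3; omega⟩
  all_goals
    refine ⟨hvS.cons le_rfl fun _ hmem => by have := hS 2 hmem; omega, ?_, ?_⟩
    · rw [weight_cons]; omega
    · rw [Multiset.mem_cons, not_or]
      exact ⟨by omega, fun h3 => by have := hS 3 h3; omega⟩

theorem split_snd_mem_codes (h : Splittable b M) :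
    (split b M).2 ∈ codes (fun _ => True) b := by
  rw [mem_codes, and_true]
  have hr := rem_lt h
  have hc := four_le_cut h
  have hwP := weight_pre_add_rem (b := b) (M := M)
  have hvP : Valid (pre b M) := h.valid.mono (pre_le h)
  unfold split
  split_ifs with h0 h1 h2 hev <;> dsimp only
  · exact ⟨hvP, by omega⟩
  · exact ⟨hvP.add_replicate_three _, by rw [weight_add, weight_replicate]; omega⟩
  · refine ⟨(hvP.mono (Multiset.erase_le _ _)).cons (by omega) fun hev hmem =>
      cut_not_mem_pre h hev (Multiset.mem_of_mem_erase hmem), ?_⟩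
    rw [← Multiset.cons_erase (two_mem_pre h h2), weight_cons] at hwP
    rw [weight_cons]
    omega
  · exact ⟨hvP.add_replicate_three _, by rw [weight_add, weight_replicate]; omega⟩
  · refine ⟨(hvP.add_replicate_three _).cons le_rfl fun _ hmem => ?_, ?_⟩
    · rcases Multiset.mem_add.1 hmem with hmem | hmem
      · exact h2 (Multiset.mem_of_le (pre_le h) hmem)
      · have := Multiset.eq_of_mem_replicate hmem; omega
    · rw [weight_cons, weight_add, weight_replicate]; omega

lemma exists_cons_of_split_eq_replicate (h : Splittable b M) {μ : Multiset ℕ}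
    (he : split b M = (μ, Multiset.replicate b 3)) :
    ∃ m X, μ = m ::ₘ X ∧ ∀ e ∈ X, m + 2 * b ≤ e ∧ e ≠ 2 * b + 2 := by
  have hc := four_le_cut h
  have hr := rem_lt h
  have h3 := count_three_pre h
  have hb := h.one_le
  have hcount := congrArg (Multiset.count 3 ·.2) he
  unfold split at he hcount
  split_ifs at he hcount with h0 h1 h2 hev <;> simp only [Prod.mk.injEq] at he <;>
    simp only [Multiset.count_add, Multiset.count_replicate_self, h3] at hcount
  · omega
  · refine ⟨_, _, he.1.symm, fun e he' => ?_⟩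
    have := cut_le_of_mem_erase_suf he'
    omega
  · have := Multiset.eq_of_mem_replicate (he.2 ▸ Multiset.mem_cons_self _ _)
    omega
  · refine ⟨_, _, he.1.symm, fun e he' => ⟨?_, ?_⟩⟩
    · have := cut_le_of_mem_erase_suf he'
      omega
    · intro hce
      rw [hce, show 2 * b + 2 = cut b M by omega, ← Multiset.count_pos,
        Multiset.count_erase_self] at he'
      have := Multiset.count_le_of_le (cut b M) (suf_le (b := b) (M := M))
      have := count_le_one_of_even h.valid hev
      omega
  · have := Multiset.eq_of_mem_replicate (he.2 ▸ Multiset.mem_cons_self _ _)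
    omega

lemma split_ne_pair (h : Splittable b M) {x y : ℕ} (hxy : x ≤ y)
    (hy : y < x + 2 * b ∨ y = 2 * b + 2) : split b M ≠ ({x, y}, Multiset.replicate b 3) := by
  intro he
  obtain ⟨m, X, hμ, hX⟩ := exists_cons_of_split_eq_replicate h he
  have hb := h.one_le
  rcases Multiset.cons_eq_cons.1 (show x ::ₘ {y} = m ::ₘ X from hμ) with
    ⟨rfl, rfl⟩ | ⟨-, cs, hy', rfl⟩
  · have := hX y (Multiset.mem_singleton_self y)
    omega
  · have hm : m ∈ ({y} : Multiset ℕ) := hy' ▸ Multiset.mem_cons_self m cs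
    obtain rfl := Multiset.mem_singleton.1 hm
    have := hX x (Multiset.mem_cons_self x cs)
    omega

lemma split_ne_of_not_valid_add (h : Splittable b M) {μ ν : Multiset ℕ}
    (hμν : ¬ Valid (μ + ν)) (h2 : 2 ∉ μ) (h3 : 3 ∉ ν) : split b M ≠ (μ, ν) := by
  intro he
  have hr := rem_lt h
  unfold split at he
  split_ifs at he with h0 h1 <;> simp only [Prod.mk.injEq] at he <;> obtain ⟨rfl, rfl⟩ := he
  · exact hμν (by rw [suf_add_pre h]; exact h.valid)
  · exact h3 (Multiset.mem_add.2 (.inr (Multiset.mem_replicate.2 ⟨h0, rfl⟩)))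
  all_goals exact h2 (Multiset.mem_cons_self _ _)

end Split

theorem overpNo_one_add_lt_of_split_ne {a b : ℕ} (ha : 1 ≤ a) (hb : 1 ≤ b)
    {p : Multiset ℕ × Multiset ℕ} (hp : p ∈ codes (1 ∉ ·) a ×ˢ codes (fun _ => True) b)
    (hmiss : ∀ M, Splittable b M → split b M ≠ p) :
    overpNo 1 (a + b) < overpNo 1 a * overp b := by
  rw [← card_codes_one_not_mem, ← card_codes_one_not_mem, ← card_codes_true, ← card_product]
  have hsplit : ∀ M ∈ codes (1 ∉ ·) (a + b), Splittable b M := fun M hM => by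
    obtain ⟨hv, hw, h3⟩ := mem_codes.1 hM
    exact ⟨hb, hv, one_mem_oddHalf.not.1 h3, by omega⟩
  have hmaps : ∀ M ∈ codes (1 ∉ ·) (a + b),
      split b M ∈ (codes (1 ∉ ·) a ×ˢ codes _ b).erase p := fun M hM => by
      have hfst := split_fst_mem_codes (hsplit M hM)
      rw [(mem_codes.1 hM).2.1, Nat.add_sub_cancel] at hfst
      exact mem_erase.2 ⟨hmiss M (hsplit M hM),
        mem_product.2 ⟨hfst, split_snd_mem_codes (hsplit M hM)⟩⟩
  have hinj : Set.InjOn (split b) (codes (1 ∉ ·) (a + b)) := fun M hM N hN he => by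
    rw [← merge_split (hsplit M hM), ← merge_split (hsplit N hN), he]
  calc (codes (1 ∉ ·) (a + b)).card
      ≤ ((codes (1 ∉ ·) a ×ˢ codes _ b).erase p).card := card_le_card_of_injOn _ hmaps hinj
    _ < _ := card_erase_lt_of_mem hp

lemma replicate_three_mem_codes (b : ℕ) :
    Multiset.replicate b 3 ∈ codes (fun _ => True) b := by
  simpa [mem_codes] using valid_zero.add_replicate_three b

theorem overpNo_one_add_lt_of_four_le {a b : ℕ} (ha : 4 ≤ a) (hb : 1 ≤ b) :
    overpNo 1 (a + b) < overpNo 1 a * overp b := by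
  have hμ : ({2 * (a / 2) + 1, a + 1} : Multiset ℕ) ∈ codes (1 ∉ ·) a := by
    rw [mem_codes, one_mem_oddHalf]
    refine ⟨(valid_zero.cons (a := a + 1) (by omega) (by simp)).cons (by omega) (by omega),
      by simp; omega, by simp; omega⟩
  exact overpNo_one_add_lt_of_split_ne (by omega) hb
    (mem_product.2 ⟨hμ, replicate_three_mem_codes b⟩)
    fun M h => split_ne_pair h (by omega) (by omega)

theorem overpNo_one_three_add_lt {b : ℕ} (hb : 1 ≤ b) :
    overpNo 1 (3 + b) < overpNo 1 3 * overp b := by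
  have hμ : ({2, 4} : Multiset ℕ) ∈ codes (1 ∉ ·) 3 := by
    rw [mem_codes, one_mem_oddHalf]
    exact ⟨(valid_zero.cons (a := 4) (by omega) (by simp)).cons (by omega) (by simp),
      by simp, by simp⟩
  exact overpNo_one_add_lt_of_split_ne (by omega) hb
    (mem_product.2 ⟨hμ, replicate_three_mem_codes b⟩)
    fun M h => split_ne_pair h (by omega) (by omega)

theorem overpNo_one_two_add_two_lt : overpNo 1 (2 + 2) < overpNo 1 2 * overp 2 := by
  have hv : Valid {4} := valid_zero.cons (by omega) (by simp)
  have hp : (({4}, {4}) : Multiset ℕ × Multiset ℕ) ∈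
      codes (1 ∉ ·) 2 ×ˢ codes (fun _ => True) 2 := by
    simp [mem_codes, one_mem_oddHalf, hv]
  exact overpNo_one_add_lt_of_split_ne (by omega) (by omega) hp
    fun M h => split_ne_of_not_valid_add (μ := {4}) (ν := {4}) h (by simp [Valid]) (by simp)
      (by simp)

end OverpCode

theorem overpNo1_mul_overp (a b : ℕ) (hb : 1 ≤ b) (hab : b ≤ a)
    (hexc : ¬((a = 1 ∧ b = 1) ∨ (a = 2 ∧ b = 1))) :
    overpNo 1 (a + b) < overpNo 1 a * overp b := by
  rcases (show 4 ≤ a ∨ a = 3 ∨ (a = 2 ∧ b = 2) by omega) with ha | rfl | ⟨rfl, rfl⟩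
  · exact OverpCode.overpNo_one_add_lt_of_four_le ha hb
  · exact OverpCode.overpNo_one_three_add_lt hb
  · exact OverpCode.overpNo_one_two_add_two_lt
end

section
/- The formal power series identity ∏_{n≥1} (1+qⁿ)/(1−qⁿ) = exp(∑_{n≥1} σ̄(n)·qⁿ/n) holds, where σ̄(n) = 2^{m+1}σ(l) for n = 2^m·l with l odd. -/
/-- Divisor sum `σ(n) = ∑_{d ∣ n} d`. -/
def sigma1 (n : ℕ) : ℕ := ∑ d ∈ n.divisors, d

/-- `σ̄(n) = 2^(m+1) σ(l)` where `n = 2^m l` with `l` odd. -/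
def sigmabar (n : ℕ) : ℕ :=
  2 ^ (n.factorization 2 + 1) * sigma1 (n / 2 ^ (n.factorization 2))

/-!
Since `log ((1 + x) / (1 - x)) = ∑_{k odd} 2 x^k / k`, the logarithm of the product is the
Lambert series `∑_d ∑_k c_k q^(d k) = ∑_n (∑_{k ∣ n} c_k) q^n` with `c_k = logRatioCoeff k`,
equal to `2 / k` for odd `k` and `0` otherwise. The odd divisors of `n = 2^m l` are the divisors of `l`, so
`∑_{k ∣ n} c_k = 2 σ(l) / l = σ̄(n) / n`.
-/

open Finset

theorem Nat.divisors_filter_not_dvd {p n : ℕ} (hp : p.Prime) (hn : n ≠ 0) :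
    n.divisors.filter (¬ p ∣ ·) = (ordCompl[p] n).divisors := by
  ext d
  simp only [mem_filter, mem_divisors, hn, (ordCompl_pos p hn).ne', ne_eq, not_false_eq_true,
    and_true]
  exact ⟨fun ⟨hdn, hpd⟩ => dvd_ordCompl_of_dvd_not_dvd hdn hpd,
    fun hd => ⟨hd.trans (ordCompl_dvd n p), fun hpd => not_dvd_ordCompl hp hn (hpd.trans hd)⟩⟩

theorem Nat.sum_inv_divisors {K : Type*} [Field K] [CharZero K] {n : ℕ} (hn : n ≠ 0) :
    ∑ d ∈ n.divisors, (d : K)⁻¹ = (∑ d ∈ n.divisors, d : ℕ) / n := by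
  rw [← Nat.sum_div_divisors, Nat.cast_sum, sum_div]
  refine sum_congr rfl fun d hd => ?_
  have hd0 : (d : K) ≠ 0 := Nat.cast_ne_zero.2 (Nat.ne_of_gt (Nat.pos_of_mem_divisors hd))
  rw [Nat.cast_div (Nat.dvd_of_mem_divisors hd) hd0]
  field_simp [hn]

section Lambert

variable {R : Type*} [NormedRing R] [CompleteSpace R] {c : ℕ → R} {C : ℝ} {q : R}

theorem summable_lambert (hc : ∀ k, ‖c k‖ ≤ C) (hq : ‖q‖ < 1) :
    Summable fun p : ℕ+ × ℕ+ => c p.2 * q ^ (p.1 * p.2 : ℕ) := by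
  refine .of_norm_bounded ((summable_prod_mul_pow 0 (r := ‖q‖) (by simpa)).mul_left C) fun p => ?_
  simp only [pow_zero, one_mul]
  calc ‖c p.2 * q ^ (p.1 * p.2 : ℕ)‖ ≤ ‖c p.2‖ * ‖q ^ (p.1 * p.2 : ℕ)‖ := norm_mul_le _ _
    _ ≤ C * ‖q‖ ^ (p.1 * p.2 : ℕ) :=
      mul_le_mul (hc _) (norm_pow_le' q (by positivity)) (norm_nonneg _)
        ((norm_nonneg _).trans (hc 0))

theorem hasSum_lambert (hc : ∀ k, ‖c k‖ ≤ C) (hq : ‖q‖ < 1) :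
    HasSum (fun n : ℕ+ => (∑ k ∈ (n : ℕ).divisors, c k) * q ^ (n : ℕ))
      (∑' p : ℕ+ × ℕ+, c p.2 * q ^ (p.1 * p.2 : ℕ)) := by
  have h := (summable_lambert hc hq).hasSum
  rw [← sigmaAntidiagonalEquivProd.hasSum_iff] at h
  refine h.sigma fun n => ?_
  convert hasSum_fintype _ using 1
  simp only [Function.comp_apply, sigmaAntidiagonalEquivProd, divisorsAntidiagonalFactors,
    Equiv.coe_fn_mk, PNat.mk_coe]
  rw [Finset.sum_coe_sort (n : ℕ).divisorsAntidiagonal (fun x => c x.2 * q ^ (x.1 * x.2)),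
    Nat.sum_divisorsAntidiagonal' (fun a b => c b * q ^ (a * b)), sum_mul]
  exact sum_congr rfl fun k hk => by rw [Nat.div_mul_cancel (Nat.dvd_of_mem_divisors hk)]

end Lambert

noncomputable def logRatioCoeff (k : ℕ) : ℝ := if Odd k then 2 / k else 0

theorem abs_logRatioCoeff_le (k : ℕ) : |logRatioCoeff k| ≤ 2 := by
  unfold logRatioCoeff
  split_ifs with hk
  · rw [abs_of_nonneg (by positivity)]
    exact div_le_self zero_le_two (Nat.one_le_cast.2 hk.pos)
  · simp

theorem sum_logRatioCoeff_divisors {n : ℕ} (hn : n ≠ 0) :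
    ∑ k ∈ n.divisors, logRatioCoeff k = sigmabar n / n := by
  have hl : ordCompl[2] n ≠ 0 := (Nat.ordCompl_pos 2 hn).ne'
  have hodd : n.divisors.filter Odd = (ordCompl[2] n).divisors := by
    simpa only [Nat.odd_iff, Nat.two_dvd_ne_zero] using
      Nat.divisors_filter_not_dvd Nat.prime_two hn
  simp only [logRatioCoeff]
  rw [← sum_filter, hodd]
  simp_rw [div_eq_mul_inv (2 : ℝ), ← mul_sum, Nat.sum_inv_divisors hl, sigmabar, sigma1]
  have hn' : (n : ℝ) = 2 ^ n.factorization 2 * (ordCompl[2] n : ℕ) := by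
    exact_mod_cast (Nat.ordProj_mul_ordCompl_eq_self n 2).symm
  rw [hn']
  push_cast
  field_simp
  ring

theorem one_add_div_one_sub_pos {x : ℝ} (hx : |x| < 1) : 0 < (1 + x) / (1 - x) := by
  obtain ⟨h₁, h₂⟩ := abs_lt.1 hx
  exact div_pos (by linarith) (by linarith)

theorem hasSum_logRatioCoeff_mul_pow {x : ℝ} (hx : |x| < 1) :
    HasSum (fun k : ℕ+ => logRatioCoeff k * x ^ (k : ℕ)) (Real.log ((1 + x) / (1 - x))) := by
  obtain ⟨h₁, h₂⟩ := abs_lt.1 hx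
  rw [Real.log_div (by linarith) (by linarith)]
  have hinj : Function.Injective fun k : ℕ => (2 * k).succPNat := fun a b h => by
    simpa using h
  rw [← hinj.hasSum_iff]
  · convert Real.hasSum_log_sub_log_of_abs_lt_one hx using 2 with k
    simp [logRatioCoeff, div_eq_mul_inv]
  · intro k hk
    rw [logRatioCoeff, if_neg, zero_mul]
    rintro ⟨m, hm⟩
    exact hk ⟨m, PNat.eq (by simp [hm])⟩

theorem prod_eq_exp_sum_sigmabar (q : ℝ) (hq : |q| < 1) :
    ∏' n : ℕ, (1 + q ^ (n + 1)) / (1 - q ^ (n + 1)) =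
      Real.exp (∑' n : ℕ, (sigmabar (n + 1) : ℝ) * q ^ (n + 1) / (n + 1)) := by
  have hc : ∀ k, ‖logRatioCoeff k‖ ≤ 2 := abs_logRatioCoeff_le
  have hq' : ‖q‖ < 1 := hq
  have hpow : ∀ n : ℕ, n ≠ 0 → |q ^ n| < 1 := fun n hn => by
    rw [abs_pow]; exact pow_lt_one₀ (abs_nonneg q) hq hn
  have hrows : HasSum (fun d : ℕ+ => Real.log ((1 + q ^ (d : ℕ)) / (1 - q ^ (d : ℕ))))
      (∑' p : ℕ+ × ℕ+, logRatioCoeff p.2 * q ^ (p.1 * p.2 : ℕ)) :=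
    (summable_lambert hc hq').hasSum.prod_fiberwise fun d => by
      simpa only [pow_mul] using hasSum_logRatioCoeff_mul_pow (hpow d d.pos.ne')
  have hcols : HasSum (fun n : ℕ+ => (sigmabar n : ℝ) * q ^ (n : ℕ) / n)
      (∑' p : ℕ+ × ℕ+, logRatioCoeff p.2 * q ^ (p.1 * p.2 : ℕ)) := by
    refine (hasSum_lambert hc hq').congr_fun fun n => ?_
    rw [sum_logRatioCoeff_divisors n.pos.ne']
    ring
  rw [← Equiv.pnatEquivNat.symm.hasSum_iff] at hrows hcols
  simp only [Function.comp_def, Equiv.pnatEquivNat_symm_apply, Nat.succPNat_coe,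
    Nat.succ_eq_add_one, Nat.cast_add, Nat.cast_one] at hrows hcols
  have hpos : ∀ n : ℕ, 0 < (1 + q ^ (n + 1)) / (1 - q ^ (n + 1)) := fun n =>
    one_add_div_one_sub_pos (hpow _ n.succ_ne_zero)
  rw [(Real.hasProd_of_hasSum_log hpos hrows).tprod_eq, hcols.tsum_eq]
end

section
/- With P̄ₙ defined by P̄₀(x)=1 and P̄ₙ(x) = (x/n)∑_{k=1}^{n} σ̄(k) P̄_{n−k}(x), the derivative satisfies P̄ₙ′(x) = ∑_{k=1}^{n} (σ̄(k)/k)·P̄_{n−k}(x) for all n ≥ 1. -/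
/-- Polynomials `P̄ₙ` with `P̄₀ = 1` and
`P̄ₙ(x) = (x/n) ∑_{k=1}^n σ̄(k) P̄_{n-k}(x)`. -/
noncomputable def Pbar : ℕ → Polynomial ℝ
  | 0 => 1
  | (n + 1) =>
      Polynomial.C ((n + 1 : ℝ)⁻¹) * Polynomial.X *
        ∑ k ∈ Finset.range (n + 1), (sigmabar (k + 1) : ℝ) • Pbar (n - k)
decreasing_by exact Nat.lt_succ_of_le (Nat.sub_le n k)

open Polynomial Finset

/-- `shiftConv b Q n = ∑_{i + j + 1 = n} b i • Q j`, the coefficient of `tⁿ` in `t B(t) Q(t)`. -/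
def shiftConv {K M : Type*} [SMul K M] [AddCommMonoid M] (b : ℕ → K) (Q : ℕ → M) (n : ℕ) : M :=
  ∑ k ∈ range n, b k • Q (n - (k + 1))

section ShiftConv

variable {K M N : Type*} [CommSemiring K] [AddCommMonoid M] [Module K M]

theorem shiftConv_zero (b : ℕ → K) (Q : ℕ → M) : shiftConv b Q 0 = 0 :=
  sum_range_zero _

theorem shiftConv_congr_of_lt (b : ℕ → K) {Q Q' : ℕ → M} {n : ℕ} (h : ∀ m < n, Q m = Q' m) :
    shiftConv b Q n = shiftConv b Q' n :=
  sum_congr rfl fun k hk => by rw [h _ (by rw [mem_range] at hk; omega)]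

theorem map_shiftConv [AddCommMonoid N] [Module K N] (f : M →ₗ[K] N) (b : ℕ → K) (Q : ℕ → M)
    (n : ℕ) : f (shiftConv b Q n) = shiftConv b (fun m => f (Q m)) n := by
  simp only [shiftConv, map_sum, map_smul]

theorem mul_shiftConv {A : Type*} [Semiring A] [Algebra K A] (p : A) (b : ℕ → K) (Q : ℕ → A)
    (n : ℕ) : p * shiftConv b Q n = shiftConv b (fun m => p * Q m) n := by
  simp only [shiftConv, mul_sum, mul_smul_comm]

theorem shiftConv_shiftConv_comm (a c : ℕ → K) (Q : ℕ → M) (n : ℕ) :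
    shiftConv a (shiftConv c Q) n = shiftConv c (shiftConv a Q) n := by
  simp only [shiftConv, smul_sum]
  refine (sum_comm' fun k j => ?_).trans (sum_congr rfl fun j _ => sum_congr rfl fun k _ => ?_)
  · simp only [mem_range]
    omega
  · rw [smul_comm, Nat.sub_right_comm]

theorem shiftConv_add_shiftConv_natCast_smul (c : ℕ → K) (Q : ℕ → M) (n : ℕ) :
    shiftConv (fun k => ((k : K) + 1) * c k) Q n + shiftConv c (fun m => (m : K) • Q m) n =
      (n : K) • shiftConv c Q n := by
  simp only [shiftConv, smul_sum, ← sum_add_distrib]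
  refine sum_congr rfl fun k hk => ?_
  have hweights : ((k : K) + 1) + ((n - (k + 1) : ℕ) : K) = n := by
    rw [← Nat.cast_add_one, ← Nat.cast_add, Nat.add_sub_cancel' (mem_range.1 hk)]
  rw [smul_smul, smul_smul, ← add_smul, ← hweights]
  ring_nf

end ShiftConv

theorem derivative_eq_shiftConv_of_natCast_smul_eq {K : Type*} [Field K] [CharZero K]
    (a : ℕ → K) (P : ℕ → K[X]) (hP₀ : derivative (P 0) = 0)
    (hP : ∀ n : ℕ, (n : K) • P n = X * shiftConv a P n) (n : ℕ) :
    derivative (P n) = shiftConv (fun k => a k / (k + 1)) P n := by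
  induction n using Nat.strong_induction_on with
  | _ n ih =>
  set c : ℕ → K := fun k => a k / (k + 1)
  have ha : (fun k : ℕ => ((k : K) + 1) * c k) = a := funext fun k => by
    simp only [c]
    field_simp
  have hIH : shiftConv a (fun m => derivative (P m)) n = shiftConv a (shiftConv c P) n :=
    shiftConv_congr_of_lt a ih
  have key : (n : K) • derivative (P n) = (n : K) • shiftConv c P n := calc
    (n : K) • derivative (P n) = derivative (X * shiftConv a P n) := by
      rw [← hP, derivative_smul]
    _ = shiftConv a P n + X * shiftConv c (shiftConv a P) n := by
      rw [derivative_mul, derivative_X, one_mul, map_shiftConv, hIH, shiftConv_shiftConv_comm]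
    _ = shiftConv (fun k => ((k : K) + 1) * c k) P n + shiftConv c (fun m => (m : K) • P m) n := by
      rw [mul_shiftConv, ha]
      simp only [← hP]
    _ = (n : K) • shiftConv c P n := shiftConv_add_shiftConv_natCast_smul c P n
  rcases n.eq_zero_or_pos with rfl | hn
  · rw [hP₀, shiftConv_zero]
  · exact smul_right_injective _ (Nat.cast_ne_zero.2 hn.ne') key

theorem natCast_smul_Pbar (n : ℕ) :
    (n : ℝ) • Pbar n = X * shiftConv (fun k => (sigmabar (k + 1) : ℝ)) Pbar n := by
  rcases n with _ | m
  · simp [shiftConv]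
  · rw [Pbar, smul_eq_C_mul, ← mul_assoc, ← mul_assoc, ← C_mul, Nat.cast_succ,
      mul_inv_cancel₀ (by positivity), C_1, one_mul]
    simp only [shiftConv, Nat.add_sub_add_right]

theorem Pbar_derivative_general (n : ℕ) :
    Polynomial.derivative (Pbar n) =
      ∑ k ∈ Finset.range n, ((sigmabar (k + 1) : ℝ) / (k + 1)) • Pbar (n - (k + 1)) :=
  derivative_eq_shiftConv_of_natCast_smul_eq _ Pbar (by simp [Pbar]) natCast_smul_Pbar n

theorem Pbar_derivative (n : ℕ) (hn : 1 ≤ n) :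
    Polynomial.derivative (Pbar n) =
      ∑ k ∈ Finset.range n, ((sigmabar (k + 1) : ℝ) / (k + 1)) • Pbar (n - (k + 1)) :=
  Pbar_derivative_general n
end

section
/- For every positive integer n and real x ≥ 1, P̄ₙ(x) < P̄_{n+1}(x). -/
/-!
Write `aₙ = P̄ₙ(x)` and `cₖ = x σ̄(k+1) > 1`, so that `(n+1) aₙ₊₁ = ∑_{k ≤ n} cₖ aₙ₋ₖ`.
Subtracting the recurrence at `n - 1` gives
`(n+1) aₙ₊₁ - n aₙ = ∑_{k < n} cₖ (aₙ₋ₖ - aₙ₋₁₋ₖ) + cₙ a₀`.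
If `a₀ < a₁ < ⋯ < aₙ`, every difference on the right is positive, so the right side exceeds
the telescoping sum `aₙ - a₀` plus `a₀`, i.e. `aₙ`; hence `(n+1) aₙ₊₁ > (n+1) aₙ`.
-/

open Finset

theorem sum_range_sub_reflect {M : Type*} [AddCommGroup M] (a : ℕ → M) (n : ℕ) :
    ∑ k ∈ range n, (a (n - k) - a (n - 1 - k)) = a n - a 0 := by
  rw [← sum_range_sub a n, ← sum_range_reflect]
  refine sum_congr rfl fun k hk => ?_
  have := mem_range.1 hk
  rw [show n - (n - 1 - k) = k + 1 by omega, show n - 1 - (n - 1 - k) = k by omega]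

theorem mul_sub_mul_eq_of_succ_mul_eq_sum {R : Type*} [CommRing R] {c a : ℕ → R}
    (hrec : ∀ n : ℕ, ((n : R) + 1) * a (n + 1) = ∑ k ∈ range (n + 1), c k * a (n - k)) (n : ℕ) :
    ((n : R) + 1) * a (n + 1) - n * a n =
      ∑ k ∈ range n, c k * (a (n - k) - a (n - 1 - k)) + c n * a 0 := by
  have hprev : (n : R) * a n = ∑ k ∈ range n, c k * a (n - 1 - k) := by
    cases n with
    | zero => simp
    | succ m => simpa using hrec m
  rw [hrec, hprev, sum_range_succ, Nat.sub_self]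
  simp only [mul_sub, sum_sub_distrib]
  ring

theorem strictMono_of_succ_mul_eq_sum {c a : ℕ → ℝ} (hc : ∀ k, 1 < c k) (ha₀ : 0 < a 0)
    (hrec : ∀ n : ℕ, ((n : ℝ) + 1) * a (n + 1) = ∑ k ∈ range (n + 1), c k * a (n - k)) :
    StrictMono a := by
  refine strictMono_nat_of_lt_succ fun n => ?_
  induction n using Nat.strong_induction_on with
  | _ n ih =>
    have hsum : a n - a 0 ≤ ∑ k ∈ range n, c k * (a (n - k) - a (n - 1 - k)) := by
      rw [← sum_range_sub_reflect a n]
      refine sum_le_sum fun k hk => ?_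
      have hstep : a (n - 1 - k) < a (n - k) := by
        have := mem_range.1 hk
        simpa [show n - 1 - k + 1 = n - k by omega] using ih (n - 1 - k) (by omega)
      exact le_mul_of_one_le_left (sub_nonneg.2 hstep.le) (hc k).le
    have hlast : a 0 < c n * a 0 := lt_mul_of_one_lt_left ha₀ (hc n)
    have hdiff := mul_sub_mul_eq_of_succ_mul_eq_sum hrec n
    have hpos : (0 : ℝ) < n + 1 := by positivity
    exact lt_of_mul_lt_mul_left (by linarith) hpos.le

theorem one_lt_sigmabar {n : ℕ} (hn : n ≠ 0) : 1 < sigmabar n := by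
  have hodd_ne_zero : n / 2 ^ n.factorization 2 ≠ 0 := (Nat.ordCompl_pos 2 hn).ne'
  refine one_lt_mul_of_lt_of_le (Nat.one_lt_two_pow (Nat.succ_ne_zero _)) ?_
  exact single_le_sum (f := id) (fun d _ => d.zero_le) (Nat.one_mem_divisors.2 hodd_ne_zero)

theorem Pbar_eval_zero (x : ℝ) : (Pbar 0).eval x = 1 := by
  rw [Pbar, Polynomial.eval_one]

theorem Pbar_eval_succ (x : ℝ) (n : ℕ) :
    ((n : ℝ) + 1) * (Pbar (n + 1)).eval x =
      ∑ k ∈ range (n + 1), (x * sigmabar (k + 1)) * (Pbar (n - k)).eval x := by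
  rw [Pbar]
  simp only [Polynomial.eval_mul, Polynomial.eval_C, Polynomial.eval_X,
    Polynomial.eval_finsetSum, Polynomial.eval_smul, smul_eq_mul]
  rw [← mul_assoc, ← mul_assoc, mul_inv_cancel₀ (by positivity), one_mul, mul_sum]
  exact sum_congr rfl fun k _ => by ring

theorem Pbar_strict_mono_general (n : ℕ) (x : ℝ) (hx : 1 ≤ x) :
    (Pbar n).eval x < (Pbar (n + 1)).eval x := by
  have hc (k : ℕ) : 1 < x * sigmabar (k + 1) :=
    one_lt_mul_of_le_of_lt hx (by exact_mod_cast one_lt_sigmabar k.succ_ne_zero)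
  have hmono : StrictMono fun m => (Pbar m).eval x :=
    strictMono_of_succ_mul_eq_sum hc (by simp [Pbar_eval_zero]) (Pbar_eval_succ x)
  exact hmono n.lt_succ_self

theorem Pbar_strict_mono (n : ℕ) (hn : 1 ≤ n) (x : ℝ) (hx : 1 ≤ x) :
    (Pbar n).eval x < (Pbar (n + 1)).eval x :=
  Pbar_strict_mono_general n x hx
end

section
/- If n + 1 = 2^s with s > 1, then there exists x_n ∈ (0,1) such that P̄_{n+1}(x_n) < P̄ₙ(x_n). -/
/-!
Every `P̄ₙ` with `n ≥ 1` is `x` times a polynomial, so near `0` the comparison of `P̄ₙ₊₁` with `P̄ₙ`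
is decided by their linear coefficients, which the recursion gives as `σ̄(n)/n`. For `n + 1 = 2^s`
the linear coefficient of `P̄ₙ₊₁` is `2^(s+1)/2^s = 2`, while `n > 1` is odd, so that of `P̄ₙ` is
`2σ(n)/n > 2`.
-/

open Polynomial Filter Topology

theorem Polynomial.exists_mem_Ioo_eval_lt_of_coeff_one_lt {p q : ℝ[X]}
    (h0 : p.coeff 0 = q.coeff 0) (h1 : p.coeff 1 < q.coeff 1) :
    ∃ x ∈ Set.Ioo (0 : ℝ) 1, p.eval x < q.eval x := by
  have hdivX : ∀ᶠ x in 𝓝[>] (0 : ℝ), p.divX.eval x < q.divX.eval x := by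
    refine Tendsto.eventually_lt ((p.divX.continuous.tendsto 0).mono_left nhdsWithin_le_nhds)
      ((q.divX.continuous.tendsto 0).mono_left nhdsWithin_le_nhds) ?_
    rwa [← coeff_zero_eq_eval_zero, ← coeff_zero_eq_eval_zero, coeff_divX, coeff_divX]
  obtain ⟨x, hlt, hx⟩ := (hdivX.and (Ioo_mem_nhdsGT one_pos)).exists
  refine ⟨x, hx, ?_⟩
  have hsplit (r : ℝ[X]) : r.eval x = x * r.divX.eval x + r.coeff 0 := by
    simpa only [eval_add, eval_mul, eval_X, eval_C] using
      (congrArg (eval x) (X_mul_divX_add r)).symm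
  rw [hsplit p, hsplit q, h0]
  gcongr
  exact hx.1

lemma sigmabar_of_odd {n : ℕ} (hn : Odd n) : sigmabar n = 2 * sigma1 n := by
  simp [sigmabar, Nat.factorization_eq_zero_of_not_dvd hn.not_two_dvd_nat]

lemma sigmabar_two_pow (s : ℕ) : sigmabar (2 ^ s) = 2 ^ (s + 1) := by
  simp [sigmabar, Nat.prime_two.factorization_pow, sigma1]

lemma lt_sigma1 {n : ℕ} (hn : 1 < n) : n < sigma1 n := by
  rw [sigma1, Nat.sum_divisors_eq_sum_properDivisors_add_self]
  have := Finset.single_le_sum (fun d _ => Nat.zero_le d)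
    (Nat.one_mem_properDivisors_iff_one_lt.2 hn)
  omega

lemma Pbar_succ (n : ℕ) :
    Pbar (n + 1) = X * (C ((n + 1 : ℝ)⁻¹) *
      ∑ k ∈ Finset.range (n + 1), (sigmabar (k + 1) : ℝ) • Pbar (n - k)) := by
  rw [Pbar]; ring

lemma Pbar_coeff_zero (n : ℕ) : (Pbar n).coeff 0 = if n = 0 then 1 else 0 := by
  cases n with
  | zero => simp [Pbar]
  | succ n => rw [Pbar_succ, coeff_X_mul_zero]; simp

lemma Pbar_coeff_one {n : ℕ} (hn : n ≠ 0) : (Pbar n).coeff 1 = sigmabar n / n := by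
  obtain ⟨m, rfl⟩ := Nat.exists_eq_succ_of_ne_zero hn
  rw [Pbar_succ, coeff_X_mul, coeff_C_mul, finsetSum_coeff,
    Finset.sum_eq_single_of_mem m (Finset.self_mem_range_succ m)]
  · simp [div_eq_inv_mul, Pbar_coeff_zero]
  · intro k hk hkm
    have : m - k ≠ 0 := by rw [Finset.mem_range] at hk; omega
    simp [Pbar_coeff_zero, this]

lemma Pbar_coeff_one_two_pow (s : ℕ) : (Pbar (2 ^ s)).coeff 1 = 2 := by
  rw [Pbar_coeff_one (by positivity), sigmabar_two_pow]
  push_cast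
  field_simp
  ring

lemma two_lt_Pbar_coeff_one_of_odd {n : ℕ} (hodd : Odd n) (hn : 1 < n) :
    2 < (Pbar n).coeff 1 := by
  have hσ : (n : ℝ) < sigma1 n := by exact_mod_cast lt_sigma1 hn
  rw [Pbar_coeff_one (by omega), sigmabar_of_odd hodd, lt_div_iff₀ (by positivity)]
  push_cast
  linarith

theorem Pbar_reverse_at_pow_two (n s : ℕ) (hs : 1 < s) (hn : n + 1 = 2 ^ s) :
    ∃ x ∈ Set.Ioo (0 : ℝ) 1, (Pbar (n + 1)).eval x < (Pbar n).eval x := by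
  have h4 : 4 ≤ n + 1 := hn ▸ Nat.pow_le_pow_right two_pos hs
  have hodd : Odd n := by
    rw [← Nat.not_even_iff_odd, ← Nat.even_add_one, hn]
    exact (Nat.even_pow' (by omega)).2 even_two
  apply exists_mem_Ioo_eval_lt_of_coeff_one_lt
  · simp [Pbar_coeff_zero, show n ≠ 0 by omega]
  · rw [hn, Pbar_coeff_one_two_pow]
    exact two_lt_Pbar_coeff_one_of_odd hodd (by omega)
end

section
/- For every positive integer n and real x ≥ 1, P̄ₙ(x) > 1 + ln(2n). -/
open Finset

lemma le_sigma1 {n : ℕ} (hn : n ≠ 0) : n ≤ sigma1 n :=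
  single_le_sum (fun d _ => Nat.zero_le d) (Nat.mem_divisors_self n hn)

lemma two_mul_le_sigmabar {n : ℕ} (hn : n ≠ 0) : 2 * n ≤ sigmabar n := by
  set m := n.factorization 2
  calc 2 * n = 2 ^ (m + 1) * (n / 2 ^ m) := by
        rw [pow_succ, mul_comm _ 2, mul_assoc, Nat.ordProj_mul_ordCompl_eq_self n 2]
    _ ≤ sigmabar n := Nat.mul_le_mul_left _ (le_sigma1 (Nat.ordCompl_pos 2 hn).ne')

lemma sum_range_two_mul_succ (m : ℕ) : ∑ k ∈ range m, (2 * ((k : ℝ) + 1)) = m * (m + 1) := by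
  induction m with
  | zero => simp
  | succ m ih => rw [sum_range_succ, ih]; push_cast; ring

lemma eval_Pbar_succ (n : ℕ) (x : ℝ) :
    (Pbar (n + 1)).eval x =
      x / (n + 1) * ∑ k ∈ range (n + 1), (sigmabar (k + 1) : ℝ) * (Pbar (n - k)).eval x := by
  rw [Pbar]
  simp only [Polynomial.eval_mul, Polynomial.eval_C, Polynomial.eval_X,
    Polynomial.eval_finsetSum, Polynomial.eval_smul, smul_eq_mul]
  ring

lemma add_one_le_eval_Pbar {x : ℝ} (hx : 1 ≤ x) (n : ℕ) : (n : ℝ) + 1 ≤ (Pbar n).eval x := by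
  induction n using Nat.strong_induction_on with
  | _ n ih =>
    rcases n with _ | n
    · simp [Pbar]
    have hterm : ∀ k ∈ range (n + 1),
        2 * ((k : ℝ) + 1) ≤ (sigmabar (k + 1) : ℝ) * (Pbar (n - k)).eval x := by
      intro k _
      have hP : 1 ≤ (Pbar (n - k)).eval x := by
        linarith [ih (n - k) (Nat.lt_succ_of_le (Nat.sub_le n k)), (n - k).cast_nonneg (α := ℝ)]
      have hσ : 2 * ((k : ℝ) + 1) ≤ sigmabar (k + 1) := by
        exact_mod_cast two_mul_le_sigmabar k.succ_ne_zero
      exact hσ.trans (le_mul_of_one_le_right (Nat.cast_nonneg _) hP)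
    have hsum : ((n : ℝ) + 1) * (n + 2) ≤
        ∑ k ∈ range (n + 1), (sigmabar (k + 1) : ℝ) * (Pbar (n - k)).eval x := by
      calc ((n : ℝ) + 1) * (n + 2) = ∑ k ∈ range (n + 1), 2 * ((k : ℝ) + 1) := by
            rw [sum_range_two_mul_succ]; push_cast; ring
        _ ≤ _ := sum_le_sum hterm
    have hx_sum := le_mul_of_one_le_left ((by positivity : (0 : ℝ) ≤ _).trans hsum) hx
    rw [eval_Pbar_succ, div_mul_eq_mul_div, le_div_iff₀ (by positivity)]
    push_cast
    linarith

lemma log_two_mul_lt_self {y : ℝ} (hy : 0 < y) : Real.log (2 * y) < y := by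
  rw [Real.log_mul two_ne_zero hy.ne']
  linarith [Real.log_le_sub_one_of_pos hy, Real.log_two_lt_d9]

theorem Pbar_gt_one_add_log (n : ℕ) (hn : 1 ≤ n) (x : ℝ) (hx : 1 ≤ x) :
    1 + Real.log (2 * n) < (Pbar n).eval x := by
  have hlog := log_two_mul_lt_self (y := n) (by exact_mod_cast hn)
  linarith [add_one_le_eval_Pbar hx n]
end

section
/- For all positive integers a, b and every integer k ≥ 2, the k-colored overpartition function satisfies p̄_{−k}(a)·p̄_{−k}(b) > p̄_{−k}(a+b). -/
open Finset

/-- Number of `k`-colored overpartitions of `n`: one overpartition for each of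
the `k` colors, with total size `n`. -/
def overpK (k n : ℕ) : ℕ :=
  ∑ f ∈ Finset.Nat.antidiagonalTuple k n, ∏ i : Fin k, overp (f i)

/-!
Cut a `k`-coloured overpartition of `a + b` after weight `a`, reading colour `0` by increasing
parts and then colours `1, …, k - 1` by decreasing parts. If the cut falls between two parts,
the two halves form a pair of coloured overpartitions of `a` and `b`. If it falls inside a part
`s` of colour `t`, leaving `r` units on the left, break `s` into `r` and `s - r`, the latter
keeping the overline of `s`. For `t = 0` the piece `r` becomes an overlined part, alone in
colour `1` of the first half, and `s - r` is the smallest part of colour `0` of the second. For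
`t > 0` the piece `r` is a plain part, the smallest of colour `t` of the first half, and `s - r`
is alone in colour `0` of the second. These markers make the cut reversible, so it is
injective. It is not surjective: if the first half lies in colour `0` and the second has parts
in colour `0`, the cut fell between two parts of colour `0`, so no part of the first half exceeds
a part of the second (ordering parts by size, then overline). The pair consisting of an
overlined `a` and of `b` ones, all in colour `0`, is therefore never reached.
-/

theorem Finset.card_lt_card_of_injOn_of_notMem {α β : Type*} {s : Finset α} {t : Finset β}
    (f : α → β) (hf : Set.MapsTo f s t) (f_inj : Set.InjOn f s) {b : β} (hb : b ∈ t)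
    (hb' : ∀ a ∈ s, f a ≠ b) : #s < #t := by
  classical
  rw [← card_image_of_injOn f_inj]
  refine card_lt_card ⟨fun y hy => ?_, fun hts => ?_⟩
  · obtain ⟨x, hx, rfl⟩ := mem_image.1 hy
    exact hf hx
  · obtain ⟨x, hx, hxb⟩ := mem_image.1 (hts hb)
    exact hb' x hx hxb

namespace Overpartition

/- A part `m` of an overpartition is coded by `2 * m + 1` if it is overlined and by `2 * m`
otherwise, so that an overpartition becomes a multiset of codes. -/

def weight : Multiset ℕ →+ ℕ :=
  Multiset.sumAddMonoidHom.comp (Multiset.mapAddMonoidHom (· / 2))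

@[simp] lemma weight_cons (d : ℕ) (M : Multiset ℕ) : weight (d ::ₘ M) = d / 2 + weight M := by
  simp [weight]

@[simp] lemma weight_singleton (d : ℕ) : weight {d} = d / 2 := by
  simp [weight]

def IsCode (M : Multiset ℕ) : Prop :=
  (∀ d ∈ M, 2 ≤ d) ∧ (M.filter Odd).Nodup

lemma IsCode.mono {M N : Multiset ℕ} (hN : IsCode N) (h : M ≤ N) : IsCode M :=
  ⟨fun d hd => hN.1 d (Multiset.mem_of_le h hd),
    Multiset.nodup_of_le (Multiset.filter_le_filter _ h) hN.2⟩

lemma IsCode.of_eq_add_cons {M P R : Multiset ℕ} {s : ℕ} (hM : IsCode M)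
    (h : M = P + s ::ₘ R) : IsCode P ∧ IsCode R :=
  ⟨hM.mono (h ▸ Multiset.le_add_right _ _),
    hM.mono (h ▸ (Multiset.le_cons_self R s).trans (Multiset.le_add_left _ _))⟩

@[simp] lemma isCode_zero : IsCode 0 := by simp [IsCode]

lemma isCode_singleton {d : ℕ} (hd : 2 ≤ d) : IsCode {d} :=
  ⟨by simpa using hd, (Multiset.nodup_singleton d).filter _⟩

lemma isCode_replicate_two (b : ℕ) : IsCode (Multiset.replicate b 2) := by
  refine ⟨fun d hd => (Multiset.eq_of_mem_replicate hd).ge, ?_⟩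
  rw [Multiset.filter_eq_nil.2 fun d hd => by rw [Multiset.eq_of_mem_replicate hd]; decide]
  exact Multiset.nodup_zero

lemma IsCode.cons {M : Multiset ℕ} {d : ℕ} (hM : IsCode M) (hd : 2 ≤ d)
    (h : Even d ∨ ∀ w ∈ M, d < w) : IsCode (d ::ₘ M) := by
  refine ⟨by simpa [hd] using hM.1, ?_⟩
  by_cases hodd : Odd d
  · rw [Multiset.filter_cons_of_pos _ hodd, Multiset.nodup_cons]
    refine ⟨fun hmem => ?_, hM.2⟩
    rcases h with h | h
    · exact (Nat.not_even_iff_odd.2 hodd) h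
    · exact lt_irrefl d (h d (Multiset.mem_of_mem_filter hmem))
  · rw [Multiset.filter_cons_of_neg _ hodd]
    exact hM.2

def encode (d p : Multiset ℕ) : Multiset ℕ :=
  d.map (2 * · + 1) + p.map (2 * ·)

def overlined (M : Multiset ℕ) : Multiset ℕ := (M.filter Odd).map (· / 2)

def plain (M : Multiset ℕ) : Multiset ℕ := (M.filter Even).map (· / 2)

lemma filter_odd_encode (d p : Multiset ℕ) : (encode d p).filter Odd = d.map (2 * · + 1) := by
  rw [encode, Multiset.filter_add, Multiset.filter_eq_self.2, Multiset.filter_eq_nil.2, add_zero]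
    <;> simp

lemma filter_even_encode (d p : Multiset ℕ) : (encode d p).filter Even = p.map (2 * ·) := by
  rw [encode, Multiset.filter_add, Multiset.filter_eq_nil.2, zero_add, Multiset.filter_eq_self.2]
    <;> simp

@[simp] lemma overlined_encode (d p : Multiset ℕ) : overlined (encode d p) = d := by
  have : ∀ m : ℕ, (2 * m + 1) / 2 = m := by omega
  simp [overlined, filter_odd_encode, Multiset.map_map, this]

@[simp] lemma plain_encode (d p : Multiset ℕ) : plain (encode d p) = p := by
  simp [plain, filter_even_encode, Multiset.map_map]

lemma encode_overlined_plain (M : Multiset ℕ) : encode (overlined M) (plain M) = M := by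
  have hsplit : M.filter Odd + M.filter Even = M := by
    simpa [Nat.not_odd_iff_even] using Multiset.filter_add_not Odd M
  conv_rhs => rw [← hsplit]
  rw [encode, overlined, plain, Multiset.map_map, Multiset.map_map]
  congr 1 <;> refine (Multiset.map_congr rfl fun d hd => ?_).trans (Multiset.map_id _) <;>
    obtain ⟨m, rfl⟩ := (Multiset.mem_filter.1 hd).2 <;> simp only [Function.comp_apply, id] <;>
    omega

lemma encode_injective : Function.Injective2 encode := fun d p d' p' h =>
  ⟨by simpa using congrArg overlined h, by simpa using congrArg plain h⟩

lemma weight_encode (d p : Multiset ℕ) : weight (encode d p) = d.sum + p.sum := by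
  have : ∀ m : ℕ, (2 * m + 1) / 2 = m := by omega
  simp [weight, encode, Multiset.map_map, this]

lemma isCode_encode {d p : Multiset ℕ} (hd : d.Nodup) (hd₀ : ∀ m ∈ d, 0 < m)
    (hp₀ : ∀ m ∈ p, 0 < m) : IsCode (encode d p) := by
  refine ⟨fun c hc => ?_, ?_⟩
  · rcases Multiset.mem_add.1 hc with hc | hc <;> obtain ⟨m, hm, rfl⟩ := Multiset.mem_map.1 hc
    · have := hd₀ m hm
      omega
    · have := hp₀ m hm
      omega
  · rw [filter_odd_encode]
    exact hd.map fun _ _ h => by omega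

lemma IsCode.nodup_overlined {M : Multiset ℕ} (hM : IsCode M) : (overlined M).Nodup :=
  hM.2.map_on fun d hd e he h => by
    obtain ⟨-, hd⟩ := Multiset.mem_filter.1 hd
    obtain ⟨-, he⟩ := Multiset.mem_filter.1 he
    grind

lemma IsCode.pos_of_mem_overlined {M : Multiset ℕ} (hM : IsCode M) {m : ℕ}
    (hm : m ∈ overlined M) : 0 < m := by
  obtain ⟨d, hd, rfl⟩ := Multiset.mem_map.1 hm
  have := hM.1 d (Multiset.mem_of_mem_filter hd)
  omega

lemma IsCode.pos_of_mem_plain {M : Multiset ℕ} (hM : IsCode M) {m : ℕ}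
    (hm : m ∈ plain M) : 0 < m := by
  obtain ⟨d, hd, rfl⟩ := Multiset.mem_map.1 hm
  have := hM.1 d (Multiset.mem_of_mem_filter hd)
  omega

def codes (m : ℕ) : Finset (Multiset ℕ) :=
  (antidiagonal m).biUnion fun ij =>
    (Nat.Partition.distincts ij.1 ×ˢ univ).image
      fun dp : ij.1.Partition × ij.2.Partition => encode dp.1.parts dp.2.parts

lemma mem_codes {m : ℕ} {M : Multiset ℕ} : M ∈ codes m ↔ IsCode M ∧ weight M = m := by
  constructor
  · simp only [codes, mem_biUnion, mem_image, mem_product, Nat.Partition.distincts,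
      mem_filter, HasAntidiagonal.mem_antidiagonal]
    rintro ⟨⟨i, j⟩, rfl, ⟨d, p⟩, ⟨⟨-, hd⟩, -⟩, rfl⟩
    exact ⟨isCode_encode hd (fun _ => d.parts_pos) (fun _ => p.parts_pos),
      by rw [weight_encode, d.parts_sum, p.parts_sum]⟩
  · rintro ⟨hM, rfl⟩
    have hd : Nat.Partition.mk (overlined M) hM.pos_of_mem_overlined rfl ∈
        Nat.Partition.distincts (overlined M).sum := by
      simpa [Nat.Partition.distincts] using hM.nodup_overlined
    simp only [codes, mem_biUnion, mem_image, mem_product, HasAntidiagonal.mem_antidiagonal]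
    exact ⟨((overlined M).sum, (plain M).sum), by rw [← weight_encode, encode_overlined_plain],
      (_, ⟨plain M, hM.pos_of_mem_plain, rfl⟩), ⟨hd, mem_univ _⟩, encode_overlined_plain M⟩

lemma card_codes (m : ℕ) : #(codes m) = overp m := by
  rw [codes, card_biUnion, overp]
  · refine sum_congr rfl fun ij _ => ?_
    rw [card_image_of_injective _ fun dp dp' h => ?_, card_product, card_univ]
    obtain ⟨hd, hp⟩ := encode_injective h
    exact Prod.ext (Nat.Partition.ext hd) (Nat.Partition.ext hp)
  · intro ij hij ij' hij' hne
    refine disjoint_left.2 fun M hM hM' => hne ?_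
    simp only [mem_image] at hM hM'
    obtain ⟨⟨d, p⟩, -, rfl⟩ := hM
    obtain ⟨⟨d', p'⟩, -, h⟩ := hM'
    have h₁ : ij'.1 = ij.1 := by rw [← d'.parts_sum, ← d.parts_sum, (encode_injective h).1]
    rw [mem_coe, HasAntidiagonal.mem_antidiagonal] at hij hij'
    exact Prod.ext h₁.symm (by omega)

variable {k : ℕ}

def totalWeight (x : Fin k → Multiset ℕ) : ℕ := ∑ i, weight (x i)

@[simp] lemma totalWeight_add (x y : Fin k → Multiset ℕ) :
    totalWeight (x + y) = totalWeight x + totalWeight y := by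
  simp [totalWeight, sum_add_distrib]

@[simp] lemma totalWeight_single (i : Fin k) (M : Multiset ℕ) :
    totalWeight (Pi.single i M) = weight M := by
  rw [totalWeight, sum_eq_single i (fun j _ hj => by simp [hj]) (by simp)]
  simp

def tuples (k m : ℕ) : Finset (Fin k → Multiset ℕ) :=
  (Nat.antidiagonalTuple k m).biUnion fun f => Fintype.piFinset fun i => codes (f i)

lemma mem_tuples {m : ℕ} {x : Fin k → Multiset ℕ} :
    x ∈ tuples k m ↔ (∀ i, IsCode (x i)) ∧ totalWeight x = m := by
  simp only [tuples, mem_biUnion, Nat.mem_antidiagonalTuple, Fintype.mem_piFinset, mem_codes,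
    totalWeight]
  constructor
  · rintro ⟨f, hf, hx⟩
    exact ⟨fun i => (hx i).1, by simp_rw [(hx _).2, hf]⟩
  · rintro ⟨hx, hm⟩
    exact ⟨fun i => weight (x i), hm, fun i => ⟨hx i, rfl⟩⟩

lemma card_tuples (m : ℕ) : #(tuples k m) = overpK k m := by
  rw [tuples, card_biUnion, overpK]
  · simp [card_codes]
  · intro f _ f' _ hne
    refine disjoint_left.2 fun x hx hx' => hne ?_
    simp only [Fintype.mem_piFinset, mem_codes] at hx hx'
    exact funext fun i => (hx i).2.symm.trans (hx' i).2

def greedyCut : ℕ → List ℕ → List ℕ × ℕ × List ℕ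
  | e, [] => ([], e, [])
  | e, d :: l =>
    if d / 2 ≤ e then
      let c := greedyCut (e - d / 2) l
      (d :: c.1, c.2.1, c.2.2)
    else ([], e, d :: l)

lemma greedyCut_spec (e : ℕ) (l : List ℕ) :
    (greedyCut e l).1 ++ (greedyCut e l).2.2 = l ∧
      weight (greedyCut e l).1 + (greedyCut e l).2.1 = e ∧
      ∀ s R, (greedyCut e l).2.2 = s :: R → (greedyCut e l).2.1 < s / 2 := by
  induction l generalizing e with
  | nil => simp [greedyCut]
  | cons d l ih =>
    by_cases h : d / 2 ≤ e
    · obtain ⟨h₁, h₂, h₃⟩ := ih (e - d / 2)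
      simp only [greedyCut, h, if_true, List.cons_append, h₁, ← Multiset.cons_coe, weight_cons,
        true_and]
      exact ⟨by omega, h₃⟩
    · simp [greedyCut, h]
      omega

lemma exists_greedyCut_eq {e : ℕ} {l : List ℕ} (h : e < weight l) :
    ∃ P r s R, greedyCut e l = (P, r, s :: R) ∧ l = P ++ s :: R ∧ weight P + r = e ∧
      r < s / 2 := by
  obtain ⟨h₁, h₂, h₃⟩ := greedyCut_spec e l
  rcases hc : greedyCut e l with ⟨P, r, _ | ⟨s, R⟩⟩ <;> rw [hc] at h₁ h₂ h₃
  · simp only [List.append_nil] at h₁ h₂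
    subst h₁
    omega
  · exact ⟨P, r, s, R, rfl, h₁.symm, h₂, h₃ s R rfl⟩

lemma exists_greedyCut_sort_eq (rel : ℕ → ℕ → Prop) [DecidableRel rel] [IsTrans ℕ rel]
    [Std.Antisymm rel] [Std.Total rel] {e : ℕ} {M : Multiset ℕ} (h : e < weight M) :
    ∃ P r s R, greedyCut e (M.sort rel) = (P, r, s :: R) ∧ M = ↑P + s ::ₘ ↑R ∧
      weight P + r = e ∧ r < s / 2 ∧ (∀ p ∈ P, rel p s) ∧ ∀ w ∈ R, rel s w := by
  rw [← Multiset.sort_eq M rel] at h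
  obtain ⟨P, r, s, R, hc, hl, hw, hr⟩ := exists_greedyCut_eq h
  have hsorted := Multiset.pairwise_sort M rel
  rw [hl, List.pairwise_append, List.pairwise_cons] at hsorted
  refine ⟨P, r, s, R, hc, ?_, hw, hr, fun p hp => hsorted.2.2 p hp s List.mem_cons_self,
    hsorted.2.1.1⟩
  rw [← Multiset.sort_eq M rel, hl, ← Multiset.coe_add, Multiset.cons_coe]

def weightBefore (x : Fin k → Multiset ℕ) (t : Fin k) : ℕ := ∑ i ∈ Iio t, weight (x i)

lemma totalWeight_indicator (s : Finset (Fin k)) (x : Fin k → Multiset ℕ) :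
    totalWeight ((s : Set (Fin k)).indicator x) = ∑ i ∈ s, weight (x i) := by
  simp [totalWeight, Set.indicator_apply, apply_ite weight, sum_ite_mem]

lemma totalWeight_indicator_Iio (x : Fin k → Multiset ℕ) (t : Fin k) :
    totalWeight ((Set.Iio t).indicator x) = weightBefore x t := by
  rw [← coe_Iio, totalWeight_indicator, weightBefore]

lemma indicator_add_single_add_indicator (x : Fin k → Multiset ℕ) (t : Fin k) :
    (Set.Iio t).indicator x + Pi.single t (x t) + (Set.Ioi t).indicator x = x := by
  funext i
  rcases lt_trichotomy i t with h | rfl | h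
  · simp [h, h.ne, h.not_gt]
  · simp
  · simp [h, h.ne', h.not_gt]

lemma totalWeight_eq_weightBefore_add (x : Fin k → Multiset ℕ) (t : Fin k) :
    totalWeight x =
      weightBefore x t + weight (x t) + totalWeight ((Set.Ioi t).indicator x) := by
  conv_lhs => rw [← indicator_add_single_add_indicator x t]
  simp [totalWeight_indicator_Iio]

variable {n : ℕ}

@[simp] lemma weightBefore_zero (x : Fin (n + 1) → Multiset ℕ) : weightBefore x 0 = 0 :=
  sum_eq_zero fun i hi => absurd (mem_Iio.1 hi) (Fin.not_lt_zero i)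

def cutColor (a : ℕ) (x : Fin (n + 1) → Multiset ℕ) : Fin (n + 1) :=
  (univ.filter fun i => weightBefore x i ≤ a).max' ⟨0, mem_filter.2 ⟨mem_univ _, by simp⟩⟩

lemma weightBefore_cutColor_le (a : ℕ) (x : Fin (n + 1) → Multiset ℕ) :
    weightBefore x (cutColor a x) ≤ a :=
  (mem_filter.1 (max'_mem (univ.filter fun i => weightBefore x i ≤ a) _)).2

lemma lt_weightBefore_cutColor_add {a : ℕ} {x : Fin (n + 1) → Multiset ℕ}
    (h : a < totalWeight x) :
    a < weightBefore x (cutColor a x) + weight (x (cutColor a x)) := by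
  set t := cutColor a x
  by_contra! hle
  have htotal := totalWeight_eq_weightBefore_add x t
  rcases (Ioi t).eq_empty_or_nonempty with hempty | hne
  · rw [← coe_Ioi, totalWeight_indicator, hempty, sum_empty] at htotal
    omega
  · set i := (Ioi t).min' hne
    have hti : t < i := mem_Ioi.1 ((Ioi t).min'_mem hne)
    have hsub : Iio i ⊆ Iic t := fun j hj => by
      by_contra hjt
      exact (mem_Iio.1 hj).not_ge ((Ioi t).min'_le j (mem_Ioi.2 (not_le.1 (by simpa using hjt))))
    have hi : weightBefore x i ≤ weightBefore x t + weight (x t) := by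
      calc weightBefore x i ≤ ∑ j ∈ Iic t, weight (x j) := sum_le_sum_of_subset hsub
        _ = weightBefore x t + weight (x t) := by
          rw [← Iio_insert, sum_insert (by simp), weightBefore, add_comm]
    exact hti.not_ge (le_max' _ i (mem_filter.2 ⟨mem_univ _, by omega⟩))

noncomputable def minPart (M : Multiset ℕ) : ℕ := sInf {d | d ∈ M}

lemma minPart_eq {M : Multiset ℕ} {d : ℕ} (hd : d ∈ M) (h : ∀ w ∈ M, d ≤ w) : minPart M = d :=
  IsLeast.csInf_eq ⟨hd, h⟩

lemma minPart_cons {M : Multiset ℕ} {d : ℕ} (h : ∀ w ∈ M, d ≤ w) : minPart (d ::ₘ M) = d :=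
  minPart_eq (Multiset.mem_cons_self d M) fun w hw => by
    rcases Multiset.mem_cons.1 hw with rfl | hw
    exacts [le_rfl, h w hw]

noncomputable def topColor (A : Fin (n + 2) → Multiset ℕ) : Fin (n + 2) :=
  (univ.filter fun i => A i ≠ 0).sup id

lemma topColor_eq {A : Fin (n + 2) → Multiset ℕ} {t : Fin (n + 2)} (ht : A t ≠ 0)
    (h : ∀ i, t < i → A i = 0) : topColor A = t :=
  le_antisymm (Finset.sup_le fun i hi => not_lt.1 fun hti => (mem_filter.1 hi).2 (h i hti))
    (le_sup (f := id) (mem_filter.2 ⟨mem_univ t, ht⟩))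

/- Breaking a part with code `s` after weight `r` leaves the code `s - 2 * r`, which keeps the
overline of `s`. -/
noncomputable def split (a : ℕ) (x : Fin (n + 2) → Multiset ℕ) :
    (Fin (n + 2) → Multiset ℕ) × (Fin (n + 2) → Multiset ℕ) :=
  let t := cutColor a x
  match greedyCut (a - weightBefore x t)
      (if t = 0 then (x t).sort (· ≤ ·) else (x t).sort (· ≥ ·)) with
  | (_, _, []) => (x, 0) -- unreachable when `a < totalWeight x`
  | (P, r, s :: R) =>
    if r = 0 then
      ((Set.Iio t).indicator x + Pi.single t ↑P, Pi.single t (s ::ₘ ↑R) + (Set.Ioi t).indicator x)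
    else if t = 0 then
      (Pi.single 0 ↑P + Pi.single 1 {2 * r + 1},
        Pi.single (0 : Fin (n + 2)) ((s - 2 * r) ::ₘ (R : Multiset ℕ)) + (Set.Ioi 0).indicator x)
    else
      ((Set.Iio t).indicator x + Pi.single t (2 * r ::ₘ ↑P),
        Pi.single 0 {s - 2 * r} + Pi.single t (R : Multiset ℕ) + (Set.Ioi t).indicator x)

def HasOverlinedMarker (A : Fin (n + 2) → Multiset ℕ) : Prop :=
  (A 1).card = 1 ∧ Odd (A 1).sum ∧ ∀ i, 1 < i → A i = 0

instance : DecidablePred (HasOverlinedMarker (n := n)) := fun _ =>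
  inferInstanceAs (Decidable (_ ∧ _ ∧ _))

lemma not_hasOverlinedMarker {A : Fin (n + 2) → Multiset ℕ} {t : Fin (n + 2)} (ht : t ≠ 0)
    {d : ℕ} (hd : d ∈ A t) (heven : Even d) : ¬ HasOverlinedMarker A := by
  rintro ⟨hcard, hodd, hzero⟩
  rcases eq_or_ne t 1 with rfl | ht₁
  · obtain ⟨e, he⟩ := Multiset.card_eq_one.1 hcard
    rw [he, Multiset.mem_singleton] at hd
    rw [he, Multiset.sum_singleton, ← hd] at hodd
    exact Nat.not_odd_iff_even.2 heven hodd
  · have h1t : 1 < t := lt_of_le_of_ne (Fin.one_le_of_ne_zero ht) ht₁.symm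
    simp [hzero t h1t] at hd

/- Glues the two pieces back: their codes add up to `s`, after removing the overline marker in
the case `t = 0`. -/
noncomputable def merge (A B : Fin (n + 2) → Multiset ℕ) : Fin (n + 2) → Multiset ℕ :=
  if B 0 = 0 ∨ ∀ i, i ≠ 0 → A i = 0 then A + B
  else if HasOverlinedMarker A then
    Function.update B 0
      (A 0 + (((A 1).sum + minPart (B 0) - 1) ::ₘ (B 0).erase (minPart (B 0))))
  else
    let T := topColor A
    let m := minPart (A T)
    (Set.Iio T).indicator A + Pi.single T ((m + (B 0).sum) ::ₘ ((A T).erase m + B T)) +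
      (Set.Ioi T).indicator B

structure IsSplitting (a b : ℕ) (x A B : Fin (n + 2) → Multiset ℕ) : Prop where
  fst_mem : A ∈ tuples (n + 2) a
  snd_mem : B ∈ tuples (n + 2) b
  merge_eq : merge A B = x
  sorted : B 0 ≠ 0 → (∀ i, i ≠ 0 → A i = 0) → ∀ u ∈ A 0, ∀ v ∈ B 0, u ≤ v

lemma isSplitting_of_add_eq {a b : ℕ} {x A B : Fin (n + 2) → Multiset ℕ}
    (hx : x ∈ tuples (n + 2) (a + b)) (hAB : A + B = x) (hA : totalWeight A = a)
    (hmerge : B 0 = 0 ∨ ∀ i, i ≠ 0 → A i = 0)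
    (hsorted : B 0 ≠ 0 → (∀ i, i ≠ 0 → A i = 0) → ∀ u ∈ A 0, ∀ v ∈ B 0, u ≤ v) :
    IsSplitting a b x A B := by
  rw [mem_tuples] at hx
  have hle : ∀ i, A i ≤ x i ∧ B i ≤ x i := fun i => by
    rw [← hAB, Pi.add_apply]
    exact ⟨Multiset.le_add_right _ _, Multiset.le_add_left _ _⟩
  have hB : totalWeight B = b := by
    have := hx.2
    rw [← hAB, totalWeight_add, hA] at this
    omega
  refine ⟨mem_tuples.2 ⟨fun i => (hx.1 i).mono (hle i).1, hA⟩,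
    mem_tuples.2 ⟨fun i => (hx.1 i).mono (hle i).2, hB⟩, ?_, hsorted⟩
  rw [merge, if_pos hmerge, hAB]

lemma isSplitting_clean {a b : ℕ} {x : Fin (n + 2) → Multiset ℕ}
    (hx : x ∈ tuples (n + 2) (a + b)) {t : Fin (n + 2)} {P R : Multiset ℕ} {s : ℕ}
    (hxt : x t = P + s ::ₘ R) (ha : weightBefore x t + weight P = a)
    (hsorted : t = 0 → (∀ p ∈ P, p ≤ s) ∧ ∀ w ∈ R, s ≤ w) :
    IsSplitting a b x ((Set.Iio t).indicator x + Pi.single t P)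
      (Pi.single t (s ::ₘ R) + (Set.Ioi t).indicator x) := by
  refine isSplitting_of_add_eq hx ?_ (by simpa [totalWeight_indicator_Iio] using ha) ?_ ?_
  · conv_rhs => rw [← indicator_add_single_add_indicator x t, hxt, Pi.single_add]
    abel
  · rcases eq_or_ne t 0 with rfl | ht
    · exact Or.inr fun i hi => by simp [hi]
    · exact Or.inl (by simp [ht.symm])
  · intro hB _ u hu v hv
    rcases eq_or_ne t 0 with rfl | ht
    · obtain ⟨hP, hR⟩ := hsorted rfl
      simp at hu hv
      rcases hv with rfl | hv
      exacts [hP u hu, (hP u hu).trans (hR v hv)]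
    · exact absurd (by simp [ht.symm]) hB

lemma merge_overlined {x : Fin (n + 2) → Multiset ℕ} {P R : Multiset ℕ} {r s : ℕ}
    (hx₀ : x 0 = P + s ::ₘ R) (hrs : 2 * r ≤ s) (hR : ∀ w ∈ R, s ≤ w) :
    merge (Pi.single 0 P + Pi.single 1 {2 * r + 1})
      (Pi.single (0 : Fin (n + 2)) ((s - 2 * r) ::ₘ R) + (Set.Ioi 0).indicator x) = x := by
  have hmin : minPart ((s - 2 * r) ::ₘ R) = s - 2 * r :=
    minPart_cons fun w hw => (Nat.sub_le s _).trans (hR w hw)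
  rw [merge, if_neg (not_or.2 ⟨by simp, fun h => by simpa using h 1 one_ne_zero⟩),
    if_pos ⟨by simp, by simp, fun i hi => by simp [hi.ne', (zero_lt_one.trans hi).ne']⟩]
  funext i
  rcases eq_or_ne i 0 with rfl | hi
  · simp [hmin, hx₀]
    omega
  · simp [hi, Fin.pos_iff_ne_zero]

lemma isSplitting_overlined {a b : ℕ} {x : Fin (n + 2) → Multiset ℕ}
    (hx : x ∈ tuples (n + 2) (a + b)) {P R : Multiset ℕ} {r s : ℕ}
    (hx₀ : x 0 = P + s ::ₘ R) (ha : weight P + r = a) (hr : 0 < r) (hrs : r < s / 2)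
    (hR : ∀ w ∈ R, s ≤ w) :
    IsSplitting a b x (Pi.single 0 P + Pi.single 1 {2 * r + 1})
      (Pi.single (0 : Fin (n + 2)) ((s - 2 * r) ::ₘ R) + (Set.Ioi 0).indicator x) := by
  rw [mem_tuples] at hx
  obtain ⟨hP, hR'⟩ := (hx.1 0).of_eq_add_cons hx₀
  have hw := totalWeight_eq_weightBefore_add x 0
  rw [weightBefore_zero, hx₀, hx.2] at hw
  simp only [map_add, weight_cons] at hw
  refine ⟨mem_tuples.2 ⟨fun i => ?_, ?_⟩, mem_tuples.2 ⟨fun i => ?_, ?_⟩,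
    merge_overlined hx₀ (by omega) hR, fun _ h => absurd (h 1 one_ne_zero) (by simp)⟩
  · rcases eq_or_ne i 0 with rfl | hi₀
    · simpa using hP
    rcases eq_or_ne i 1 with rfl | hi₁
    · simpa using isCode_singleton (by omega : 2 ≤ 2 * r + 1)
    · simp [hi₀, hi₁]
  · simp
    omega
  · rcases eq_or_ne i 0 with rfl | hi₀
    · simpa using hR'.cons (by omega) (Or.inr fun w hw => by have := hR w hw; omega)
    · simpa [hi₀, Fin.pos_iff_ne_zero] using hx.1 i
  · simp
    omega

lemma merge_plain {x : Fin (n + 2) → Multiset ℕ} {t : Fin (n + 2)} (ht : t ≠ 0)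
    {P R : Multiset ℕ} {r s : ℕ} (hxt : x t = P + s ::ₘ R) (hrs : 2 * r ≤ s)
    (hP : ∀ p ∈ P, s ≤ p) :
    merge ((Set.Iio t).indicator x + Pi.single t (2 * r ::ₘ P))
      (Pi.single 0 {s - 2 * r} + Pi.single t R + (Set.Ioi t).indicator x) = x := by
  have ht₀ : 0 < t := Fin.pos_iff_ne_zero.2 ht
  have hlow : (Set.Iio t).indicator ((Set.Iio t).indicator x + Pi.single t (2 * r ::ₘ P)) =
      (Set.Iio t).indicator x :=
    Set.indicator_congr fun i hi => by simp [Set.mem_Iio.1 hi, (Set.mem_Iio.1 hi).ne]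
  have hhigh : (Set.Ioi t).indicator
      (Pi.single 0 {s - 2 * r} + Pi.single t R + (Set.Ioi t).indicator x) =
      (Set.Ioi t).indicator x :=
    Set.indicator_congr fun i hi => by
      simp [Set.mem_Ioi.1 hi, (Set.mem_Ioi.1 hi).ne', (ht₀.trans (Set.mem_Ioi.1 hi)).ne']
  have hmin : minPart (2 * r ::ₘ P) = 2 * r := minPart_cons fun p hp => hrs.trans (hP p hp)
  rw [merge, if_neg (not_or.2 ⟨by simp [ht.symm], fun h => by simpa using h t ht⟩),
    if_neg (not_hasOverlinedMarker ht (d := 2 * r) (by simp) (even_two_mul r))]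
  dsimp only
  rw [topColor_eq (t := t) (by simp) fun i hi => by simp [hi.ne', hi.not_gt], hlow, hhigh]
  conv_rhs => rw [← indicator_add_single_add_indicator x t]
  congr 2
  simp [hmin, ht.symm, hxt]
  omega

lemma isSplitting_plain {a b : ℕ} {x : Fin (n + 2) → Multiset ℕ}
    (hx : x ∈ tuples (n + 2) (a + b)) {t : Fin (n + 2)} (ht : t ≠ 0) {P R : Multiset ℕ}
    {r s : ℕ} (hxt : x t = P + s ::ₘ R) (ha : weightBefore x t + weight P + r = a) (hr : 0 < r)
    (hrs : r < s / 2) (hP : ∀ p ∈ P, s ≤ p) :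
    IsSplitting a b x ((Set.Iio t).indicator x + Pi.single t (2 * r ::ₘ P))
      (Pi.single 0 {s - 2 * r} + Pi.single t R + (Set.Ioi t).indicator x) := by
  rw [mem_tuples] at hx
  obtain ⟨hP', hR⟩ := (hx.1 t).of_eq_add_cons hxt
  have hw := totalWeight_eq_weightBefore_add x t
  rw [hxt, hx.2] at hw
  simp only [map_add, weight_cons] at hw
  refine ⟨mem_tuples.2 ⟨fun i => ?_, ?_⟩, mem_tuples.2 ⟨fun i => ?_, ?_⟩,
    merge_plain ht hxt (by omega) hP, fun _ h => absurd (h t ht) (by simp)⟩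
  · rcases lt_trichotomy i t with h | rfl | h
    · simpa [h, h.ne] using hx.1 i
    · simpa using hP'.cons (by omega) (Or.inl (even_two_mul r))
    · simp [h.ne', h.not_gt]
  · simp [totalWeight_indicator_Iio]
    omega
  · rcases eq_or_ne i 0 with rfl | hi₀
    · simpa [ht.symm] using isCode_singleton (by omega : 2 ≤ s - 2 * r)
    rcases lt_trichotomy i t with h | rfl | h
    · simp [h.ne, h.not_gt, hi₀]
    · simpa [hi₀] using hR
    · simpa [h, h.ne', hi₀] using hx.1 i
  · simp
    omega

lemma isSplitting_split {a b : ℕ} (hb : 0 < b) {x : Fin (n + 2) → Multiset ℕ}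
    (hx : x ∈ tuples (n + 2) (a + b)) : IsSplitting a b x (split a x).1 (split a x).2 := by
  have hle := weightBefore_cutColor_le a x
  have hlt := lt_weightBefore_cutColor_add (a := a) (x := x)
    (by rw [(mem_tuples.1 hx).2]; omega)
  unfold split
  set t := cutColor a x
  replace hlt : a - weightBefore x t < weight (x t) := by omega
  rcases eq_or_ne t 0 with ht | ht
  · obtain ⟨P, r, s, R, hcut, hxt, hw, hrs, hP, hR⟩ := exists_greedyCut_sort_eq (· ≤ ·) hlt
    simp only [if_pos ht, hcut]
    split_ifs with hr
    · exact isSplitting_clean hx hxt (by omega) fun _ => ⟨hP, hR⟩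
    · rw [ht] at hxt hw
      rw [weightBefore_zero] at hw
      exact isSplitting_overlined hx hxt (by omega) (by omega) hrs hR
  · obtain ⟨P, r, s, R, hcut, hxt, hw, hrs, hP, -⟩ := exists_greedyCut_sort_eq (· ≥ ·) hlt
    simp only [if_neg ht, hcut]
    split_ifs with hr
    · exact isSplitting_clean hx hxt (by omega) fun h => absurd h ht
    · exact isSplitting_plain hx ht hxt (by omega) (by omega) hrs hP

lemma single_mem_tuples_product {a b : ℕ} (ha : 0 < a) :
    (Pi.single (0 : Fin (n + 2)) {2 * a + 1}, Pi.single (0 : Fin (n + 2))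
      (Multiset.replicate b 2)) ∈ tuples (n + 2) a ×ˢ tuples (n + 2) b := by
  refine mem_product.2 ⟨mem_tuples.2 ⟨fun i => ?_, by simp; omega⟩,
    mem_tuples.2 ⟨fun i => ?_, by simp [weight]⟩⟩
  · by_cases hi : i = 0 <;> simp [hi, isCode_singleton (by omega : 2 ≤ 2 * a + 1)]
  · by_cases hi : i = 0 <;> simp [hi, isCode_replicate_two]

lemma not_isSplitting_single {a b : ℕ} (ha : 0 < a) (hb : 0 < b) (x : Fin (n + 2) → Multiset ℕ) :
    ¬ IsSplitting a b x (Pi.single 0 {2 * a + 1}) (Pi.single 0 (Multiset.replicate b 2)) := by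
  intro h
  have hmem : 2 ∈ Multiset.replicate b 2 := Multiset.mem_replicate.2 ⟨hb.ne', rfl⟩
  have := h.sorted (by rw [Pi.single_eq_same]; rintro h0; simp [h0] at hmem)
    (fun i hi => by simp [hi]) (2 * a + 1) (by simp) 2 (by simpa using hmem)
  omega

lemma overpK_add_lt_mul {a b : ℕ} (ha : 0 < a) (hb : 0 < b) :
    overpK (n + 2) (a + b) < overpK (n + 2) a * overpK (n + 2) b := by
  rw [← card_tuples, ← card_tuples, ← card_tuples, ← card_product]
  have hsplit : ∀ x ∈ tuples (n + 2) (a + b), IsSplitting a b x (split a x).1 (split a x).2 :=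
    fun x hx => isSplitting_split hb hx
  refine card_lt_card_of_injOn_of_notMem (split a)
    (fun x hx => mem_product.2 ⟨(hsplit x hx).fst_mem, (hsplit x hx).snd_mem⟩)
    (fun x hx y hy h => ?_) (single_mem_tuples_product ha) fun x hx h => ?_
  · rw [← (hsplit x hx).merge_eq, ← (hsplit y hy).merge_eq, h]
  · have := hsplit x hx
    rw [h] at this
    exact not_isSplitting_single ha hb x this

end Overpartition

theorem overpK_mul_gt (a b k : ℕ) (ha : 1 ≤ a) (hb : 1 ≤ b) (hk : 2 ≤ k) :
    overpK k (a + b) < overpK k a * overpK k b := by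
  obtain ⟨n, rfl⟩ := Nat.exists_eq_add_of_le' hk
  exact Overpartition.overpK_add_lt_mul ha hb
end
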